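/- arXiv:2111.07905 — 10 statements merged into one kernel-verified Lean document; each statement's English description precedes it below -/
import Mathlib

section
/- Let k be a commutative ring, X a scheme over k, and {i_λ : Z_λ → X}_{λ∈Λ} a small family of monomorphisms of k-schemes. The following are equivalent: (a) the induced map ⨿_{λ∈Λ} |Z_λ| → |X| on underlying topological spaces is a bijection; (b) for every field F over k, the induced map ⨿_{λ∈Λ} Z_λ(F) → X(F) is a bijection; (c) for every algebraically closed field F over k, the induced map ⨿_{λ∈Λ} Z_λ(F) → X(F) is a bijection. -/
/-!
Statement 0: For a commutative ring `k`, a `k`-scheme `X` (a scheme with a structure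
morphism to `Spec k`) and a family of monomorphisms of `k`-schemes `i l : Z l ⟶ X`,
the following are equivalent:
(a) the induced map `⨿ |Z l| → |X|` on underlying topological spaces is a bijection;
(b) for every field `F` over `k`, the induced map `⨿ Z l (F) → X(F)` on `F`-points
    over `k` is a bijection;
(c) the same for every algebraically closed field `F` over `k`.
-/

open AlgebraicGeometry CategoryTheory Limits TensorProduct

universe u

theorem AlgebraicGeometry.Scheme.comp_base_apply {X Y Z : Scheme} (f : X ⟶ Y) (g : Y ⟶ Z) (x : X) :
    (f ≫ g).base x = g.base (f.base x) := rfl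

lemma mem_range_of_tmul_eq' {F K : Type u} [Field F] [Field K] [Algebra F K] (a : K)
    (h : a ⊗ₜ[F] 1 = 1 ⊗ₜ[F] a) : a ∈ (algebraMap F K).range := by
  by_contra hna
  have h1 : a ∉ Submodule.span F ({1} : Set K) := by
    rw [Submodule.mem_span_singleton]
    rintro ⟨c, rfl⟩
    exact hna ⟨c, by simp [Algebra.smul_def]⟩
  have hone : LinearIndepOn F id ({1} : Set K) :=
    (linearIndepOn_singleton_iff F).mpr one_ne_zero
  have hins : LinearIndepOn F id (insert a {1} : Set K) := by
    rw [linearIndepOn_id_insert (by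
      rintro (rfl : a = 1)
      exact hna ⟨1, by simp⟩)]
    exact ⟨hone, h1⟩
  classical
  let B := Module.Basis.extend hins
  have hmemA : a ∈ hins.extend (Set.subset_univ _) :=
    hins.subset_extend _ (Set.mem_insert a {1})
  have hmem1 : (1 : K) ∈ hins.extend (Set.subset_univ _) :=
    hins.subset_extend _ (Set.mem_insert_of_mem a rfl)
  let ℓ : K →ₗ[F] F := B.coord ⟨a, hmemA⟩
  have hBa : B ⟨a, hmemA⟩ = a := Module.Basis.extend_apply_self hins _
  have hB1 : B ⟨(1 : K), hmem1⟩ = 1 := Module.Basis.extend_apply_self hins _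
  have hla : ℓ a = 1 := by
    rw [show a = B ⟨a, hmemA⟩ from hBa.symm]
    simp [ℓ, Module.Basis.coord_apply, Module.Basis.repr_self]
  have hne : (⟨(1 : K), hmem1⟩ : hins.extend (Set.subset_univ _)) ≠ ⟨a, hmemA⟩ := by
    intro hEq
    exact hna ⟨1, by simpa using congrArg Subtype.val hEq⟩
  have hl1 : ℓ (1 : K) = 0 := by
    rw [show (1 : K) = B ⟨(1 : K), hmem1⟩ from hB1.symm]
    simp [ℓ, Module.Basis.coord_apply, Module.Basis.repr_self]
    rw [Finsupp.single_apply, if_neg hne]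
  let M : K ⊗[F] K →ₗ[F] K := (TensorProduct.lid F K).toLinearMap ∘ₗ
    TensorProduct.map ℓ LinearMap.id
  have hM := congrArg M h
  simp only [M, LinearMap.comp_apply, TensorProduct.map_tmul, LinearMap.id_apply,
    LinearEquiv.coe_coe, TensorProduct.lid_tmul, hla, hl1] at hM
  simp at hM

lemma epi_of_mono_specMap {R S : CommRingCat.{u}} (φ : R ⟶ S)
    (h : Mono (Spec.map φ)) : Epi φ := by
  constructor
  intro T a b hab
  apply Spec.map_injective
  rw [← cancel_mono (Spec.map φ), ← Spec.map_comp, ← Spec.map_comp, hab]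

lemma section_of_mono_to_spec_field (F : Type u) [Field F] (W : Scheme.{u})
    (q : W ⟶ Spec (CommRingCat.of F)) [Mono q] (w : W) :
    ∃ s : Spec (CommRingCat.of F) ⟶ W, s ≫ q = 𝟙 _ := by
  let g₀ : Spec (W.residueField w) ⟶ W := W.fromSpecResidueField w
  haveI : Mono g₀ := inferInstance
  let φ : CommRingCat.of F ⟶ W.residueField w := Spec.preimage (g₀ ≫ q)
  have hφ : Spec.map φ = g₀ ≫ q := Spec.map_preimage _
  haveI hm : Mono (Spec.map φ) := by rw [hφ]; exact mono_comp _ _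
  have hepi : Epi φ := epi_of_mono_specMap φ hm
  letI alg : Algebra F ↥(W.residueField w) :=
    RingHom.toAlgebra (show F →+* ↥(W.residueField w) from φ.hom)
  have hepi' : Epi (CommRingCat.ofHom (algebraMap F ↥(W.residueField w))) := hepi
  have htmul := fun a => ((Algebra.isEpi_iff_forall_one_tmul_eq F _).mp
    (CommRingCat.epi_iff_epi.mp hepi') a).symm
  have hsurj : Function.Surjective (show F →+* ↥(W.residueField w) from φ.hom) := by
    intro a
    exact mem_range_of_tmul_eq' a (htmul a)
  have hbij : Function.Bijective (show F →+* ↥(W.residueField w) from φ.hom) :=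
    ⟨RingHom.injective _, hsurj⟩
  haveI : IsIso φ := by
    rw [ConcreteCategory.isIso_iff_bijective]
    exact hbij
  refine ⟨Spec.map (inv φ) ≫ g₀, ?_⟩
  rw [Category.assoc, ← hφ, ← Spec.map_comp, IsIso.hom_inv_id, Spec.map_id]

lemma exists_lift_of_mono {Z X : Scheme.{u}} (i : Z ⟶ X) [Mono i] (F : Type u) [Field F]
    (g : Spec (CommRingCat.of F) ⟶ X) (z : Z) (hz : g.base default = i.base z) :
    ∃ f : Spec (CommRingCat.of F) ⟶ Z, f ≫ i = g := by
  obtain ⟨w, hw1, hw2⟩ := Scheme.Pullback.exists_preimage_pullback default z hz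
  obtain ⟨s, hs⟩ := section_of_mono_to_spec_field F (pullback g i) (pullback.fst g i) w
  refine ⟨s ≫ pullback.snd g i, ?_⟩
  rw [Category.assoc, ← pullback.condition, ← Category.assoc, hs, Category.id_comp]

theorem set_theoretic_decomposition_tfae
    (k : Type u) [CommRing k] (X : Scheme.{u})
    (sX : X ⟶ Spec (CommRingCat.of k))
    (Λ : Type u) (Z : Λ → Scheme.{u})
    (sZ : ∀ l, Z l ⟶ Spec (CommRingCat.of k))
    (i : ∀ l, Z l ⟶ X)
    (hmono : ∀ l, Mono (i l))
    (hover : ∀ l, i l ≫ sX = sZ l) :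
    List.TFAE
      [ -- (a) bijection on underlying topological spaces
        Function.Bijective (fun p : Σ l, (Z l).carrier => (i p.1).base p.2),
        -- (b) bijection on F-points for every field F over k
        ∀ (F : Type u) [Field F] [Algebra k F],
          Function.Bijective
            (fun p : Σ l, {f : Spec (CommRingCat.of F) ⟶ Z l //
                  f ≫ sZ l = Spec.map (CommRingCat.ofHom (algebraMap k F))} =>
              (⟨p.2.1 ≫ i p.1, by rw [Category.assoc, hover p.1]; exact p.2.2⟩ :
                {f : Spec (CommRingCat.of F) ⟶ X //
                  f ≫ sX = Spec.map (CommRingCat.ofHom (algebraMap k F))})),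
        -- (c) bijection on F-points for every algebraically closed field F over k
        ∀ (F : Type u) [Field F] [IsAlgClosed F] [Algebra k F],
          Function.Bijective
            (fun p : Σ l, {f : Spec (CommRingCat.of F) ⟶ Z l //
                  f ≫ sZ l = Spec.map (CommRingCat.ofHom (algebraMap k F))} =>
              (⟨p.2.1 ≫ i p.1, by rw [Category.assoc, hover p.1]; exact p.2.2⟩ :
                {f : Spec (CommRingCat.of F) ⟶ X //
                  f ≫ sX = Spec.map (CommRingCat.ofHom (algebraMap k F))})) ] := by
  tfae_have 1 → 2 := by
    intro ha F _ _
    constructor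
    · rintro ⟨l, f⟩ ⟨l', f'⟩ hpq
      have h0 : f.1 ≫ i l = f'.1 ≫ i l' := congrArg Subtype.val hpq
      have h1 : (fun p : Σ l, (Z l).carrier => (i p.1).base p.2) ⟨l, f.1.base default⟩ =
          (fun p : Σ l, (Z l).carrier => (i p.1).base p.2) ⟨l', f'.1.base default⟩ := by
        show (i l).base (f.1.base default) = (i l').base (f'.1.base default)
        rw [← Scheme.comp_base_apply, ← Scheme.comp_base_apply, h0]
      obtain ⟨h2, -⟩ := Sigma.mk.inj_iff.mp (ha.injective h1)
      subst h2
      haveI := hmono l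
      have h3 : f.1 = f'.1 := by rwa [cancel_mono (i l)] at h0
      rw [Subtype.ext h3]
    · rintro ⟨g, hg⟩
      obtain ⟨⟨l, z⟩, hz⟩ := ha.surjective (g.base default)
      haveI := hmono l
      obtain ⟨f, hf⟩ := exists_lift_of_mono (i l) F g z hz.symm
      refine ⟨⟨l, f, ?_⟩, ?_⟩
      · rw [← hover l, ← Category.assoc, hf]; exact hg
      · exact Subtype.ext hf
  tfae_have 2 → 3 := fun hb F _ _ _ => hb F
  tfae_have 3 → 1 := by
    intro hc
    constructor
    · rintro ⟨l, z⟩ ⟨l', z'⟩ hpq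
      simp only at hpq
      haveI := hmono l
      haveI := hmono l'
      set a : Spec ((Z l).residueField z) ⟶ X := (Z l).fromSpecResidueField z ≫ i l with ha
      set b : Spec ((Z l').residueField z') ⟶ X := (Z l').fromSpecResidueField z' ≫ i l' with hb
      have hab : a.base (IsLocalRing.closedPoint _) = b.base (IsLocalRing.closedPoint _) := by
        exact (congrArg (i l) (Scheme.fromSpecResidueField_apply z (IsLocalRing.closedPoint _))).trans
          (hpq.trans (congrArg (i l')
            (Scheme.fromSpecResidueField_apply z' (IsLocalRing.closedPoint _))).symm)
      obtain ⟨w, -, -⟩ := Scheme.Pullback.exists_preimage_pullback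
        (f := a) (g := b) (IsLocalRing.closedPoint _) (IsLocalRing.closedPoint _) hab
      set W : Scheme.{u} := pullback a b with hW
      set FF : Type u := AlgebraicClosure ↥(W.residueField w) with hFF
      set r : Spec (CommRingCat.of FF) ⟶ W :=
        Spec.map (CommRingCat.ofHom (algebraMap ↥(W.residueField w) FF)) ≫
          W.fromSpecResidueField w with hr
      set f : Spec (CommRingCat.of FF) ⟶ Z l :=
        r ≫ pullback.fst a b ≫ (Z l).fromSpecResidueField z with hf0
      set f' : Spec (CommRingCat.of FF) ⟶ Z l' :=
        r ≫ pullback.snd a b ≫ (Z l').fromSpecResidueField z' with hf0'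
      have hcomm : f ≫ i l = f' ≫ i l' := by
        rw [hf0, hf0']
        simp only [Category.assoc]
        rw [← ha, ← hb, pullback.condition]
      letI : Algebra k FF := RingHom.toAlgebra (show k →+* FF from (Spec.preimage (f ≫ sZ l)).hom)
      have hfk : f ≫ sZ l = Spec.map (CommRingCat.ofHom (algebraMap k FF)) :=
        (Spec.map_preimage _).symm
      have hfk' : f' ≫ sZ l' = Spec.map (CommRingCat.ofHom (algebraMap k FF)) := by
        rw [← hover l', ← Category.assoc, ← hcomm, Category.assoc, hover l]
        exact hfk
      have key := (hc FF).injective (a₁ := ⟨l, f, hfk⟩) (a₂ := ⟨l', f', hfk'⟩)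
        (Subtype.ext hcomm)
      obtain ⟨h2, h3⟩ := Sigma.mk.inj_iff.mp key
      subst h2
      have h4 : f = f' := congrArg Subtype.val (eq_of_heq h3)
      have hz : f.base default = z := by
        rw [hf0, Scheme.comp_base_apply, Scheme.comp_base_apply,
          Scheme.fromSpecResidueField_apply]
      have hz' : f'.base default = z' := by
        rw [hf0', Scheme.comp_base_apply, Scheme.comp_base_apply,
          Scheme.fromSpecResidueField_apply]
      have : z = z' := by rw [← hz, ← hz', h4]
      rw [this]
    · intro x
      set FF : Type u := AlgebraicClosure ↥(X.residueField x) with hFF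
      set g : Spec (CommRingCat.of FF) ⟶ X :=
        Spec.map (CommRingCat.ofHom (algebraMap ↥(X.residueField x) FF)) ≫
          X.fromSpecResidueField x with hg0
      letI : Algebra k FF := RingHom.toAlgebra (show k →+* FF from (Spec.preimage (g ≫ sX)).hom)
      have hgk : g ≫ sX = Spec.map (CommRingCat.ofHom (algebraMap k FF)) :=
        (Spec.map_preimage _).symm
      obtain ⟨⟨l, f, hf⟩, heq⟩ := (hc FF).surjective ⟨g, hgk⟩
      have h1 : f ≫ i l = g := congrArg Subtype.val heq
      refine ⟨⟨l, f.base default⟩, ?_⟩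
      show (i l).base (f.base default) = x
      rw [← Scheme.comp_base_apply, h1, hg0, Scheme.comp_base_apply]
      exact Scheme.fromSpecResidueField_apply x _
  tfae_finish
end

section
/- Let k be a commutative ring, X a scheme over k, {i_λ : Z_λ → X}_{λ∈Λ} a small family of monomorphisms of k-schemes, and k' a commutative k-algebra. If {Z_λ} exhibits a set theoretic decomposition of X, then the base-changed family {Z_λ ×_{Spec k} Spec k' → X ×_{Spec k} Spec k'} exhibits a set theoretic decomposition of X ×_{Spec k} Spec k'. -/
/-!
Statement 1: If a family of monomorphisms of `k`-schemes `i l : Z l ⟶ X` exhibits a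
set theoretic decomposition of `X` (i.e. the induced map `⨿ |Z l| → |X|` is a
bijection), then for any commutative `k`-algebra `k'`, the base-changed family
`Z l ×_{Spec k} Spec k' ⟶ X ×_{Spec k} Spec k'` exhibits a set theoretic
decomposition of `X ×_{Spec k} Spec k'`.
-/

open AlgebraicGeometry CategoryTheory Limits

universe u

theorem set_theoretic_decomposition_base_change
    (k k' : Type u) [CommRing k] [CommRing k'] [Algebra k k']
    (X : Scheme.{u}) (sX : X ⟶ Spec (CommRingCat.of k))
    (Λ : Type u) (Z : Λ → Scheme.{u})
    (sZ : ∀ l, Z l ⟶ Spec (CommRingCat.of k))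
    (i : ∀ l, Z l ⟶ X)
    (hmono : ∀ l, Mono (i l))
    (hover : ∀ l, i l ≫ sX = sZ l)
    (hdec : Function.Bijective (fun p : Σ l, (Z l).carrier => (i p.1).base p.2)) :
    Function.Bijective
      (fun p : Σ l, (pullback (sZ l) (Spec.map (CommRingCat.ofHom (algebraMap k k')))).carrier =>
        (pullback.map (sZ p.1) (Spec.map (CommRingCat.ofHom (algebraMap k k'))) sX
            (Spec.map (CommRingCat.ofHom (algebraMap k k'))) (i p.1) (𝟙 _) (𝟙 _)
            (by rw [Category.comp_id, ← hover p.1]) (by simp)).base p.2) := by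
  set f := Spec.map (CommRingCat.ofHom (algebraMap k k')) with hf
  set g : ∀ l, pullback (sZ l) f ⟶ pullback sX f := fun l =>
    pullback.map (sZ l) f sX f (i l) (𝟙 _) (𝟙 _)
      (by rw [Category.comp_id, ← hover l]) (by simp) with hg
  -- the square with top `g l`, left `pullback.fst (sZ l) f`, right `pullback.fst sX f`,
  -- bottom `i l` is a pullback square
  have hsq : ∀ l, IsPullback (g l) (pullback.fst (sZ l) f) (pullback.fst sX f) (i l) := by
    intro l
    apply IsPullback.of_right (h₁₂ := pullback.snd sX f) (v₁₃ := f)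
      (s := ?_) (p := ?_) (t := (IsPullback.of_hasPullback sX f).flip)
    · rw [pullback.lift_snd, Category.comp_id, ← hover l]
      exact ((hover l) ▸ (IsPullback.of_hasPullback (sZ l) f).flip)
    · rw [pullback.lift_fst]
  have hmono' : ∀ l, Mono (g l) := fun l =>
    MorphismProperty.of_isPullback (P := MorphismProperty.monomorphisms Scheme)
      (hsq l).flip (hmono l)
  constructor
  · -- injectivity
    rintro ⟨l₁, p₁⟩ ⟨l₂, p₂⟩ h
    simp only at h
    have h1 := congrArg (pullback.fst sX f).base h
    rw [← Scheme.Hom.comp_apply, ← Scheme.Hom.comp_apply, pullback.lift_fst,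
      pullback.lift_fst, Scheme.Hom.comp_apply, Scheme.Hom.comp_apply] at h1
    have := hdec.1 (a₁ := ⟨l₁, (pullback.fst (sZ l₁) f).base p₁⟩)
      (a₂ := ⟨l₂, (pullback.fst (sZ l₂) f).base p₂⟩) h1
    obtain ⟨rfl, -⟩ := Sigma.mk.inj_iff.mp this
    have : UniversallyInjective (g l₁) := by have := hmono' l₁; infer_instance
    exact Sigma.ext rfl (heq_of_eq ((g l₁).injective h))
  · -- surjectivity
    intro q
    obtain ⟨⟨l, z⟩, hz⟩ := hdec.2 ((pullback.fst sX f).base q)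
    obtain ⟨w, hw1, hw2⟩ := Scheme.Pullback.exists_preimage_pullback
      (f := pullback.fst sX f) (g := i l) q z hz.symm
    refine ⟨⟨l, ((hsq l).isoPullback.inv).base w⟩, ?_⟩
    show (g l).base _ = q
    rw [← Scheme.Hom.comp_apply]
    have : (hsq l).isoPullback.inv ≫ g l = pullback.fst (pullback.fst sX f) (i l) := by
      rw [Iso.inv_comp_eq]
      exact ((hsq l).isoPullback_hom_fst).symm
    rw [this, hw1]
end

section
/- Let k be a commutative ring, X a scheme over k, {i_λ : Z_λ → X}_{λ∈Λ} a small family of monomorphisms of k-schemes, and k' a faithfully flat commutative k-algebra. If the base-changed family {Z_λ ×_{Spec k} Spec k' → X ×_{Spec k} Spec k'} exhibits a set theoretic decomposition of X ×_{Spec k} Spec k', then {Z_λ} exhibits a set theoretic decomposition of X. -/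
/-!
Statement 2: Let `k'` be a faithfully flat commutative `k`-algebra. If the
base-changed family `Z l ×_{Spec k} Spec k' ⟶ X ×_{Spec k} Spec k'` of a family of
monomorphisms of `k`-schemes `i l : Z l ⟶ X` exhibits a set theoretic decomposition
of `X ×_{Spec k} Spec k'`, then `{Z l}` exhibits a set theoretic decomposition of `X`.
-/

open AlgebraicGeometry CategoryTheory Limits TensorProduct

universe u

lemma comap_surj_of_faithfullyFlat (k k' : Type u) [CommRing k] [CommRing k'] [Algebra k k']
    [Module.FaithfullyFlat k k'] :
    Function.Surjective (PrimeSpectrum.comap (algebraMap k k')) := by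
  intro p
  haveI := p.isPrime
  let A := Localization.AtPrime p.asIdeal
  let κ := IsLocalRing.ResidueField A
  haveI : Nontrivial (κ ⊗[k] k') := Module.FaithfullyFlat.rTensor_nontrivial k k' κ
  obtain ⟨m, hm⟩ := Ideal.exists_maximal (κ ⊗[k] k')
  let q : PrimeSpectrum (κ ⊗[k] k') := ⟨m, hm.isPrime⟩
  refine ⟨PrimeSpectrum.comap (Algebra.TensorProduct.includeRight.toRingHom :
      k' →+* κ ⊗[k] k') q, ?_⟩
  ext1
  rw [PrimeSpectrum.comap_asIdeal, PrimeSpectrum.comap_asIdeal, Ideal.comap_comap,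
    ← Algebra.TensorProduct.includeLeftRingHom_comp_algebraMap (A := κ), ← Ideal.comap_comap]
  have h0 : Ideal.comap (Algebra.TensorProduct.includeLeftRingHom : κ →+* κ ⊗[k] k') q.asIdeal
      = ⊥ := Ideal.eq_bot_of_prime _
  rw [h0]
  have : Ideal.comap (algebraMap k κ) (⊥ : Ideal κ) = RingHom.ker (algebraMap k κ) := rfl
  rw [this, IsScalarTower.algebraMap_eq k A κ, ← RingHom.comap_ker]
  have hker : RingHom.ker (algebraMap A κ) = IsLocalRing.maximalIdeal A :=
    IsLocalRing.ker_residue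
  rw [hker]
  exact Localization.AtPrime.comap_maximalIdeal

theorem set_theoretic_decomposition_descent
    (k k' : Type u) [CommRing k] [CommRing k'] [Algebra k k']
    [Module.FaithfullyFlat k k']
    (X : Scheme.{u}) (sX : X ⟶ Spec (CommRingCat.of k))
    (Λ : Type u) (Z : Λ → Scheme.{u})
    (sZ : ∀ l, Z l ⟶ Spec (CommRingCat.of k))
    (i : ∀ l, Z l ⟶ X)
    (hmono : ∀ l, Mono (i l))
    (hover : ∀ l, i l ≫ sX = sZ l)
    (hdec' : Function.Bijective
      (fun p : Σ l, (pullback (sZ l) (Spec.map (CommRingCat.ofHom (algebraMap k k')))).carrier =>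
        (pullback.map (sZ p.1) (Spec.map (CommRingCat.ofHom (algebraMap k k'))) sX
            (Spec.map (CommRingCat.ofHom (algebraMap k k'))) (i p.1) (𝟙 _) (𝟙 _)
            (by rw [Category.comp_id, ← hover p.1]) (by simp)).base p.2)) :
    Function.Bijective (fun p : Σ l, (Z l).carrier => (i p.1).base p.2) := by
  set f := Spec.map (CommRingCat.ofHom (algebraMap k k')) with hf
  have hfs : Function.Surjective f.base := by
    rw [hf, Spec.map_base]
    exact comap_surj_of_faithfullyFlat k k'
  set F : ∀ l, pullback (sZ l) f ⟶ pullback sX f := fun l =>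
    pullback.map (sZ l) f sX f (i l) (𝟙 _) (𝟙 _)
      (by rw [Category.comp_id, ← hover l]) (by simp) with hF
  have hFfst : ∀ l, F l ≫ pullback.fst sX f = pullback.fst (sZ l) f ≫ i l := fun l =>
    pullback.lift_fst _ _ _
  have hFsnd : ∀ l, F l ≫ pullback.snd sX f = pullback.snd (sZ l) f := fun l => by
    have h1 : F l ≫ pullback.snd sX f = pullback.snd (sZ l) f ≫ 𝟙 _ := pullback.lift_snd _ _ _
    rwa [Category.comp_id] at h1
  constructor
  · rintro ⟨l1, x1⟩ ⟨l2, x2⟩ hx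
    simp only at hx
    -- lift x1 to z1 in pullback (sZ l1) f
    obtain ⟨w, hw⟩ := hfs ((sZ l1).base x1)
    obtain ⟨z1, hz1, -⟩ := Scheme.Pullback.exists_preimage_pullback (f := sZ l1) (g := f)
      x1 w hw.symm
    set y' := (F l1).base z1 with hy'
    have hy'fst : (pullback.fst sX f).base y' = (i l1).base x1 := by
      rw [hy', ← Scheme.Hom.comp_apply, hFfst l1, Scheme.Hom.comp_apply, hz1]
    obtain ⟨p2, hp2, hp2'⟩ := Scheme.Pullback.exists_preimage_pullback
      (f := i l2) (g := pullback.fst sX f) x2 y' (by rw [hy'fst, hx])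
    have hcond : pullback.fst (i l2) (pullback.fst sX f) ≫ sZ l2 =
        (pullback.snd (i l2) (pullback.fst sX f) ≫ pullback.snd sX f) ≫ f := by
      simp only [← hover l2, Category.assoc, ← pullback.condition (f := sX) (g := f)]
      rw [← Category.assoc, ← Category.assoc, pullback.condition]
    let g2 : pullback (i l2) (pullback.fst sX f) ⟶ pullback (sZ l2) f :=
      pullback.lift (pullback.fst _ _)
        (pullback.snd _ _ ≫ pullback.snd sX f) hcond
    have hcomm : g2 ≫ F l2 = pullback.snd (i l2) (pullback.fst sX f) := by
      apply pullback.hom_ext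
      · rw [Category.assoc, hFfst l2, ← Category.assoc]
        exact (congrArg (· ≫ i l2) (pullback.lift_fst _ _ _)).trans pullback.condition
      · rw [Category.assoc, hFsnd l2]
        exact pullback.lift_snd _ _ _
    have he : (⟨l2, g2.base p2⟩ : Σ l, (pullback (sZ l) f).carrier) = ⟨l1, z1⟩ := by
      apply hdec'.injective
      show (F l2).base (g2.base p2) = (F l1).base z1
      rw [← Scheme.Hom.comp_apply, hcomm, hp2', hy']
    have el : l2 = l1 := congrArg Sigma.fst he
    subst el
    have ez : g2.base p2 = z1 := by simpa using he
    have hx12 : x2 = x1 := by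
      have h1 : (pullback.fst (sZ l2) f).base (g2.base p2) = x2 := by
        rw [← Scheme.Hom.comp_apply]
        rw [show g2 ≫ pullback.fst (sZ l2) f = pullback.fst (i l2) (pullback.fst sX f) from
          pullback.lift_fst _ _ _, hp2]
      rw [← h1, ez, hz1]
    simp [hx12]
  · intro x
    obtain ⟨w, hw⟩ := hfs (sX.base x)
    obtain ⟨y, hy1, -⟩ := Scheme.Pullback.exists_preimage_pullback (f := sX) (g := f)
      x w hw.symm
    obtain ⟨⟨l, z⟩, hz⟩ := hdec'.surjective y
    refine ⟨⟨l, (pullback.fst (sZ l) f).base z⟩, ?_⟩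
    show (i l).base ((pullback.fst (sZ l) f).base z) = x
    rw [← Scheme.Hom.comp_apply, ← hFfst l, Scheme.Hom.comp_apply]
    have : (F l).base z = y := hz
    rw [this, hy1]
end

section
/- Let R be a commutative ring, g ∈ SL₃(R), b ∈ B_std(R) an upper triangular matrix of determinant 1, and k ∈ SO(3,R). Then for each i ∈ {1,2}: c_i(g) is a unit of R if and only if c_i(kgb) is a unit of R, and c_i(g) = 0 if and only if c_i(kgb) = 0. -/
open Matrix

/-- The standard symmetric bilinear form on `R³`: `(v,w) = ∑ i, v i * w i`. -/
def bil {R : Type*} [CommRing R] (v w : Fin 3 → R) : R := ∑ j, v j * w j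

/-- The `j`-th column of a 3×3 matrix. -/
def vcol {R : Type*} (g : Matrix (Fin 3) (Fin 3) R) (j : Fin 3) : Fin 3 → R :=
  fun i => g i j

/-- Membership in `SO(3,R)`: `kᵀk = 1` and `det k = 1`. -/
def SO3 {R : Type*} [CommRing R] (g : Matrix (Fin 3) (Fin 3) R) : Prop :=
  gᵀ * g = 1 ∧ g.det = 1

/-- A 3×3 matrix is upper triangular. -/
def UpperTri {R : Type*} [CommRing R] (b : Matrix (Fin 3) (Fin 3) R) : Prop :=
  ∀ i j : Fin 3, j < i → b i j = 0

/-- `c₁(g) = (v₁(g), v₁(g))`. -/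
def c1 {R : Type*} [CommRing R] (g : Matrix (Fin 3) (Fin 3) R) : R :=
  bil (vcol g 0) (vcol g 0)

/-- `c₂(g) = (v₁(g),v₁(g))(v₂(g),v₂(g)) − (v₁(g),v₂(g))²`. -/
def c2 {R : Type*} [CommRing R] (g : Matrix (Fin 3) (Fin 3) R) : R :=
  bil (vcol g 0) (vcol g 0) * bil (vcol g 1) (vcol g 1) - (bil (vcol g 0) (vcol g 1)) ^ 2

/-- `c₃(g) = (v₁(g), v₂(g))`. -/
def c3 {R : Type*} [CommRing R] (g : Matrix (Fin 3) (Fin 3) R) : R :=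
  bil (vcol g 0) (vcol g 1)

lemma bil_mulVec {R : Type*} [CommRing R] (k : Matrix (Fin 3) (Fin 3) R)
    (hk : kᵀ * k = 1) (v w : Fin 3 → R) :
    bil (k.mulVec v) (k.mulVec w) = bil v w := by
  have : bil (k.mulVec v) (k.mulVec w) = (k.mulVec v) ⬝ᵥ (k.mulVec w) := rfl
  rw [this, Matrix.dotProduct_mulVec, ← Matrix.mulVec_transpose,
    Matrix.mulVec_mulVec, hk, Matrix.one_mulVec]
  rfl

lemma vcol_mul {R : Type*} [CommRing R] (A B : Matrix (Fin 3) (Fin 3) R) (j : Fin 3) :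
    vcol (A * B) j = A.mulVec (vcol B j) := by
  ext i
  simp [vcol, Matrix.mul_apply, Matrix.mulVec, dotProduct]

/-!
Statement 6: For `g ∈ SL₃(R)`, `b ∈ B_std(R)` and `k ∈ SO(3,R)`, for `i ∈ {1,2}`:
`cᵢ(g)` is a unit iff `cᵢ(kgb)` is a unit, and `cᵢ(g) = 0` iff `cᵢ(kgb) = 0`.
-/

theorem c1_c2_invariance {R : Type*} [CommRing R] (g b k : Matrix (Fin 3) (Fin 3) R)
    (hg : g.det = 1) (hb : UpperTri b) (hbdet : b.det = 1) (hk : SO3 k) :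
    ((IsUnit (c1 g) ↔ IsUnit (c1 (k * g * b))) ∧ (c1 g = 0 ↔ c1 (k * g * b) = 0)) ∧
    ((IsUnit (c2 g) ↔ IsUnit (c2 (k * g * b))) ∧ (c2 g = 0 ↔ c2 (k * g * b) = 0)) := by
  obtain ⟨hk1, -⟩ := hk
  have hb10 : b 1 0 = 0 := hb 1 0 (by decide)
  have hb20 : b 2 0 = 0 := hb 2 0 (by decide)
  have hb21 : b 2 1 = 0 := hb 2 1 (by decide)
  have hdet : b 0 0 * (b 1 1 * b 2 2) = 1 := by
    rw [Matrix.det_fin_three, hb10, hb20, hb21] at hbdet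
    linear_combination hbdet
  have hu0 : IsUnit (b 0 0) := IsUnit.of_mul_eq_one _ hdet
  have hu1 : IsUnit (b 1 1) := IsUnit.of_mul_eq_one (b 2 2 * b 0 0) (by
    linear_combination hdet)
  -- reduce to g * b using invariance under k
  have hcol : ∀ j, vcol (k * g * b) j = k.mulVec (vcol (g * b) j) := by
    intro j
    rw [mul_assoc, vcol_mul]
  have hbil : ∀ i j : Fin 3,
      bil (vcol (k * g * b) i) (vcol (k * g * b) j) = bil (vcol (g * b) i) (vcol (g * b) j) := by
    intro i j
    rw [hcol, hcol, bil_mulVec k hk1]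
  -- column formulas for g * b
  have hc1 : c1 (k * g * b) = (b 0 0) ^ 2 * c1 g := by
    show bil _ _ = _
    rw [hbil]
    simp only [c1, bil, vcol, Matrix.mul_apply, Fin.sum_univ_three, hb10, hb20, hb21]
    ring
  have hc2 : c2 (k * g * b) = (b 0 0 * b 1 1) ^ 2 * c2 g := by
    show bil _ _ * bil _ _ - (bil _ _) ^ 2 = _
    rw [hbil, hbil, hbil]
    simp only [c2, bil, vcol, Matrix.mul_apply, Fin.sum_univ_three, hb10, hb20, hb21]
    ring
  have hu0sq : IsUnit ((b 0 0) ^ 2) := hu0.pow 2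
  have hu01sq : IsUnit ((b 0 0 * b 1 1) ^ 2) := (hu0.mul hu1).pow 2
  refine ⟨⟨?_, ?_⟩, ⟨?_, ?_⟩⟩
  · rw [hc1]; exact ⟨fun h => hu0sq.mul h, fun h => isUnit_of_mul_isUnit_right h⟩
  · rw [hc1, hu0sq.mul_right_eq_zero]
  · rw [hc2]; exact ⟨fun h => hu01sq.mul h, fun h => isUnit_of_mul_isUnit_right h⟩
  · rw [hc2, hu01sq.mul_right_eq_zero]
end

section
/- Let R be a commutative ring, g ∈ SL₃(R) with c₁(g) = 0, b ∈ B_std(R) an upper triangular matrix of determinant 1, and k ∈ SO(3,R). Then c₃(g) is a unit of R if and only if c₃(kgb) is a unit of R, and c₃(g) = 0 if and only if c₃(kgb) = 0. -/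
open Matrix

/-!
Statement 7: For `g ∈ SL₃(R)` with `c₁(g) = 0`, `b ∈ B_std(R)` and `k ∈ SO(3,R)`:
`c₃(g)` is a unit iff `c₃(kgb)` is a unit, and `c₃(g) = 0` iff `c₃(kgb) = 0`.
-/

/-- Key computation: `c₃(kgb) = b₀₀ b₁₁ c₃(g)` when `c₁(g) = 0`. -/
theorem c3_transform {R : Type*} [CommRing R] (g b k : Matrix (Fin 3) (Fin 3) R)
    (hc1 : c1 g = 0) (hb : UpperTri b) (hk : kᵀ * k = 1) :
    c3 (k * g * b) = b 0 0 * b 1 1 * c3 g := by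
  have h10 : b 1 0 = 0 := hb 1 0 (by decide)
  have h20 : b 2 0 = 0 := hb 2 0 (by decide)
  have h21 : b 2 1 = 0 := hb 2 1 (by decide)
  have hK : ∀ p q : Fin 3, k 0 p * k 0 q + k 1 p * k 1 q + k 2 p * k 2 q
      = (1 : Matrix (Fin 3) (Fin 3) R) p q := by
    intro p q
    have := congrFun (congrFun hk p) q
    simpa [Matrix.mul_apply, Matrix.transpose_apply, Fin.sum_univ_three, mul_comm] using this
  have hK00 : k 0 0 * k 0 0 + k 1 0 * k 1 0 + k 2 0 * k 2 0 = 1 := by simpa using hK 0 0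
  have hK01 : k 0 0 * k 0 1 + k 1 0 * k 1 1 + k 2 0 * k 2 1 = 0 := by simpa using hK 0 1
  have hK02 : k 0 0 * k 0 2 + k 1 0 * k 1 2 + k 2 0 * k 2 2 = 0 := by simpa using hK 0 2
  have hK10 : k 0 1 * k 0 0 + k 1 1 * k 1 0 + k 2 1 * k 2 0 = 0 := by simpa using hK 1 0
  have hK11 : k 0 1 * k 0 1 + k 1 1 * k 1 1 + k 2 1 * k 2 1 = 1 := by simpa using hK 1 1
  have hK12 : k 0 1 * k 0 2 + k 1 1 * k 1 2 + k 2 1 * k 2 2 = 0 := by simpa using hK 1 2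
  have hK20 : k 0 2 * k 0 0 + k 1 2 * k 1 0 + k 2 2 * k 2 0 = 0 := by simpa using hK 2 0
  have hK21 : k 0 2 * k 0 1 + k 1 2 * k 1 1 + k 2 2 * k 2 1 = 0 := by simpa using hK 2 1
  have hK22 : k 0 2 * k 0 2 + k 1 2 * k 1 2 + k 2 2 * k 2 2 = 1 := by simpa using hK 2 2
  simp only [c1, c3, bil, vcol, Matrix.mul_apply, Fin.sum_univ_three, h10, h20, h21,
    mul_zero, zero_mul, add_zero, zero_add] at hc1 ⊢
  linear_combination
    hK00 * (g 0 0 * b 0 0) * (g 0 0 * b 0 1 + g 0 1 * b 1 1) +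
    hK01 * (g 0 0 * b 0 0) * (g 1 0 * b 0 1 + g 1 1 * b 1 1) +
    hK02 * (g 0 0 * b 0 0) * (g 2 0 * b 0 1 + g 2 1 * b 1 1) +
    hK10 * (g 1 0 * b 0 0) * (g 0 0 * b 0 1 + g 0 1 * b 1 1) +
    hK11 * (g 1 0 * b 0 0) * (g 1 0 * b 0 1 + g 1 1 * b 1 1) +
    hK12 * (g 1 0 * b 0 0) * (g 2 0 * b 0 1 + g 2 1 * b 1 1) +
    hK20 * (g 2 0 * b 0 0) * (g 0 0 * b 0 1 + g 0 1 * b 1 1) +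
    hK21 * (g 2 0 * b 0 0) * (g 1 0 * b 0 1 + g 1 1 * b 1 1) +
    hK22 * (g 2 0 * b 0 0) * (g 2 0 * b 0 1 + g 2 1 * b 1 1) +
    (b 0 0 * b 0 1) * hc1

theorem c3_invariance {R : Type*} [CommRing R] (g b k : Matrix (Fin 3) (Fin 3) R)
    (hg : g.det = 1) (hc1 : c1 g = 0) (hb : UpperTri b) (hbdet : b.det = 1) (hk : SO3 k) :
    (IsUnit (c3 g) ↔ IsUnit (c3 (k * g * b))) ∧ (c3 g = 0 ↔ c3 (k * g * b) = 0) := by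
  have key : c3 (k * g * b) = b 0 0 * b 1 1 * c3 g := c3_transform g b k hc1 hb hk.1
  have h10 : b 1 0 = 0 := hb 1 0 (by decide)
  have h20 : b 2 0 = 0 := hb 2 0 (by decide)
  have h21 : b 2 1 = 0 := hb 2 1 (by decide)
  have hdet : b 0 0 * b 1 1 * b 2 2 = 1 := by
    rw [Matrix.det_fin_three, h10, h20, h21] at hbdet
    linear_combination hbdet
  have hu : IsUnit (b 0 0 * b 1 1) := IsUnit.of_mul_eq_one (b 2 2) hdet
  constructor
  · rw [key]
    exact ⟨fun h => hu.mul h, fun h => isUnit_of_mul_isUnit_right h⟩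
  · rw [key]
    exact ⟨fun h => by rw [h, mul_zero], fun h => by
      have := hu.mul_right_eq_zero.mp h; exact this⟩
end

section
/- Let F be an algebraically closed field of characteristic different from 2 and g ∈ SL₃(F). Then there exist k ∈ SO(3,F) and an upper triangular matrix b ∈ SL₃(F) with g = kb if and only if c₁(g) ≠ 0 and c₂(g) ≠ 0. -/
open Matrix

/-!
If `kᵀk = 1` then `(kb)ᵀ(kb) = bᵀb`, and `c₁`, `c₂` are the leading principal minors of this
Gram matrix; for upper triangular `b` they are `b₀₀²` and `(b₀₀b₁₁)²`, units because
`b₀₀b₁₁b₂₂ = det b = 1`. Conversely, choose `α² = c₁` and `β² = c₁c₂`. Gram–Schmidt gives the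
orthonormal vectors `u = v₁/α` and `w = (c₁v₂ − c₃v₁)/β` (the numerator has square norm `c₁c₂`),
and `k = [u, w, u × w] ∈ SO(3)` makes `kᵀg` upper triangular.
-/

lemma upperTri_iff_isUpperTriangular {R : Type*} [CommRing R] (b : Matrix (Fin 3) (Fin 3) R) :
    UpperTri b ↔ b.IsUpperTriangular :=
  ⟨fun hb _ _ h => hb _ _ h, fun hb _ _ h => hb h⟩

section Gram

variable {R : Type*} [CommRing R]

lemma c1_eq_gram (g : Matrix (Fin 3) (Fin 3) R) : c1 g = (gᵀ * g) 0 0 := by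
  simp [c1, bil, vcol, mul_apply]

lemma c2_eq_gram (g : Matrix (Fin 3) (Fin 3) R) :
    c2 g = (gᵀ * g) 0 0 * (gᵀ * g) 1 1 - (gᵀ * g) 0 1 ^ 2 := by
  simp [c2, bil, vcol, mul_apply]

lemma gram_orthogonal_mul {k : Matrix (Fin 3) (Fin 3) R} (hk : kᵀ * k = 1)
    (g : Matrix (Fin 3) (Fin 3) R) : (k * g)ᵀ * (k * g) = gᵀ * g := by
  rw [transpose_mul, Matrix.mul_assoc, ← Matrix.mul_assoc kᵀ, hk, Matrix.one_mul]

lemma c1_orthogonal_mul {k : Matrix (Fin 3) (Fin 3) R} (hk : kᵀ * k = 1)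
    (g : Matrix (Fin 3) (Fin 3) R) : c1 (k * g) = c1 g := by
  rw [c1_eq_gram, c1_eq_gram, gram_orthogonal_mul hk]

lemma c2_orthogonal_mul {k : Matrix (Fin 3) (Fin 3) R} (hk : kᵀ * k = 1)
    (g : Matrix (Fin 3) (Fin 3) R) : c2 (k * g) = c2 g := by
  rw [c2_eq_gram, c2_eq_gram, gram_orthogonal_mul hk]

lemma c1_of_isUpperTriangular {b : Matrix (Fin 3) (Fin 3) R} (hb : b.IsUpperTriangular) :
    c1 b = b 0 0 ^ 2 := by
  have h10 : b 1 0 = 0 := hb (by decide)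
  have h20 : b 2 0 = 0 := hb (by decide)
  simp [c1, bil, vcol, Fin.sum_univ_three, h10, h20, sq]

lemma c2_of_isUpperTriangular {b : Matrix (Fin 3) (Fin 3) R} (hb : b.IsUpperTriangular) :
    c2 b = (b 0 0 * b 1 1) ^ 2 := by
  have h10 : b 1 0 = 0 := hb (by decide)
  have h20 : b 2 0 = 0 := hb (by decide)
  have h21 : b 2 1 = 0 := hb (by decide)
  simp only [c2, bil, vcol, Fin.sum_univ_three, h10, h20, h21, mul_zero, add_zero, zero_mul]
  ring

end Gram

lemma c1_ne_zero_and_c2_ne_zero_of_orthogonal_mul {R : Type*} [CommRing R] [Nontrivial R]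
    {k b : Matrix (Fin 3) (Fin 3) R} (hk : kᵀ * k = 1) (hb : b.IsUpperTriangular)
    (hdb : b.det = 1) : c1 (k * b) ≠ 0 ∧ c2 (k * b) ≠ 0 := by
  have hdiag : b 0 0 * b 1 1 * b 2 2 = 1 := by
    rw [← hdb, det_of_isUpperTriangular hb, Fin.prod_univ_three]
  have hunit : IsUnit (b 0 0 * b 1 1) := IsUnit.of_mul_eq_one _ hdiag
  rw [c1_orthogonal_mul hk, c2_orthogonal_mul hk, c1_of_isUpperTriangular hb,
    c2_of_isUpperTriangular hb]
  exact ⟨((isUnit_of_mul_isUnit_left hunit).pow 2).ne_zero, (hunit.pow 2).ne_zero⟩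

section Frame

variable {R : Type*} [CommRing R]

lemma of_mul_apply (A : Fin 3 → Fin 3 → R) (g : Matrix (Fin 3) (Fin 3) R) (i j : Fin 3) :
    (of A * g) i j = A i ⬝ᵥ vcol g j := rfl

lemma SO3_transpose_of_orthonormal {u v : Fin 3 → R} (huu : u ⬝ᵥ u = 1) (hvv : v ⬝ᵥ v = 1)
    (huv : u ⬝ᵥ v = 0) : SO3 (of ![u, v, u ⨯₃ v])ᵀ := by
  have hww : u ⨯₃ v ⬝ᵥ u ⨯₃ v = 1 := by
    rw [cross_dot_cross, huu, hvv, huv]; ring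
  refine ⟨?_, ?_⟩
  · ext i j
    change ![u, v, u ⨯₃ v] i ⬝ᵥ ![u, v, u ⨯₃ v] j = (1 : Matrix (Fin 3) (Fin 3) R) i j
    fin_cases i <;> fin_cases j <;>
      simp [huu, hvv, huv, hww, dotProduct_comm v u, dotProduct_comm (u ⨯₃ v),
        dot_self_cross, dot_cross_self]
  · rw [det_transpose]
    change det ![u, v, u ⨯₃ v] = 1
    rw [← triple_product_eq_det, triple_product_permutation, triple_product_permutation, hww]

lemma isUpperTriangular_of_mul {u v w : Fin 3 → R} (g : Matrix (Fin 3) (Fin 3) R)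
    (hv0 : v ⬝ᵥ vcol g 0 = 0) (hw0 : w ⬝ᵥ vcol g 0 = 0) (hw1 : w ⬝ᵥ vcol g 1 = 0) :
    (of ![u, v, w] * g).IsUpperTriangular := by
  intro i j hij
  rw [of_mul_apply]
  fin_cases i <;> fin_cases j <;> simp_all

end Frame

lemma exists_SO3_mul_upperTri_of_transpose_mul {R : Type*} [CommRing R]
    {k g : Matrix (Fin 3) (Fin 3) R} (hk : SO3 k) (hg : g.det = 1)
    (hb : (kᵀ * g).IsUpperTriangular) :
    ∃ k b : Matrix (Fin 3) (Fin 3) R, SO3 k ∧ UpperTri b ∧ b.det = 1 ∧ g = k * b := by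
  refine ⟨k, kᵀ * g, hk, (upperTri_iff_isUpperTriangular _).2 hb, ?_, ?_⟩
  · rw [det_mul, det_transpose, hk.2, hg, one_mul]
  · rw [← Matrix.mul_assoc, mul_eq_one_comm.mp hk.1, Matrix.one_mul]

lemma exists_SO3_mul_upperTri_of_isSquare {F : Type*} [Field F]
    {g : Matrix (Fin 3) (Fin 3) F} (hg : g.det = 1) (h1 : c1 g ≠ 0) (h2 : c2 g ≠ 0)
    (hs1 : IsSquare (c1 g)) (hs2 : IsSquare (c1 g * c2 g)) :
    ∃ k b : Matrix (Fin 3) (Fin 3) F, SO3 k ∧ UpperTri b ∧ b.det = 1 ∧ g = k * b := by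
  obtain ⟨α, hα⟩ := hs1
  obtain ⟨β, hβ⟩ := hs2
  have hα0 : α ≠ 0 := by rintro rfl; exact h1 (by simpa using hα)
  have hβ0 : β ≠ 0 := by rintro rfl; exact mul_ne_zero h1 h2 (by simpa using hβ)
  set v₁ := vcol g 0
  set v₂ := vcol g 1
  set w₀ := c1 g • v₂ - c3 g • v₁
  have h11 : v₁ ⬝ᵥ v₁ = c1 g := rfl
  have h12 : v₁ ⬝ᵥ v₂ = c3 g := rfl
  have h22 : c2 g = c1 g * (v₂ ⬝ᵥ v₂) - c3 g ^ 2 := rfl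
  have hw₀v₁ : v₁ ⬝ᵥ w₀ = 0 := by
    simp only [w₀, dotProduct_sub, dotProduct_smul, h11, h12, smul_eq_mul]
    ring
  have hw₀w₀ : w₀ ⬝ᵥ w₀ = β * β := by
    simp only [w₀, dotProduct_sub, sub_dotProduct, dotProduct_smul, smul_dotProduct, h11, h12,
      dotProduct_comm v₂ v₁, smul_eq_mul]
    linear_combination hβ - c1 g * h22
  set u := α⁻¹ • v₁
  set w := β⁻¹ • w₀
  have huu : u ⬝ᵥ u = 1 := by
    simp only [u, smul_dotProduct, dotProduct_smul, h11, hα, smul_eq_mul]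
    field_simp
  have hww : w ⬝ᵥ w = 1 := by
    simp only [w, smul_dotProduct, dotProduct_smul, hw₀w₀, smul_eq_mul]
    field_simp
  have huw : u ⬝ᵥ w = 0 := by
    simp only [u, w, smul_dotProduct, dotProduct_smul, hw₀v₁, smul_zero]
  refine exists_SO3_mul_upperTri_of_transpose_mul (SO3_transpose_of_orthonormal huu hww huw) hg
    (isUpperTriangular_of_mul g ?_ ?_ ?_)
  · change w ⬝ᵥ v₁ = 0
    rw [dotProduct_comm, dotProduct_smul, hw₀v₁, smul_zero]
  · change u ⨯₃ w ⬝ᵥ v₁ = 0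
    simp only [u, map_smul, LinearMap.smul_apply, dotProduct_comm _ v₁, dotProduct_smul,
      dot_self_cross, smul_zero]
  · change u ⨯₃ w ⬝ᵥ v₂ = 0
    simp only [u, w, w₀, map_smul, map_sub, cross_self, sub_zero, LinearMap.smul_apply,
      dotProduct_comm _ v₂, dotProduct_smul, dot_cross_self, smul_zero]

theorem factorization_open_orbit_general {F : Type*} [Field F] [IsAlgClosed F]
    (g : Matrix (Fin 3) (Fin 3) F) (hg : g.det = 1) :
    (∃ k b : Matrix (Fin 3) (Fin 3) F, SO3 k ∧ UpperTri b ∧ b.det = 1 ∧ g = k * b)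
      ↔ (c1 g ≠ 0 ∧ c2 g ≠ 0) := by
  constructor
  · rintro ⟨k, b, hk, hb, hdb, rfl⟩
    exact c1_ne_zero_and_c2_ne_zero_of_orthogonal_mul hk.1
      ((upperTri_iff_isUpperTriangular b).1 hb) hdb
  · rintro ⟨h1, h2⟩
    exact exists_SO3_mul_upperTri_of_isSquare hg h1 h2 (IsAlgClosed.exists_eq_mul_self _)
      (IsAlgClosed.exists_eq_mul_self _)

theorem factorization_open_orbit {F : Type*} [Field F] [IsAlgClosed F]
    (hchar : (2 : F) ≠ 0) (g : Matrix (Fin 3) (Fin 3) F) (hg : g.det = 1) :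
    (∃ k b : Matrix (Fin 3) (Fin 3) F, SO3 k ∧ UpperTri b ∧ b.det = 1 ∧ g = k * b)
      ↔ (c1 g ≠ 0 ∧ c2 g ≠ 0) :=
  factorization_open_orbit_general g hg
end

section
/- Let R be a commutative ring in which 2 is invertible, containing an element i with i² = −1, and let g₁ be the 3×3 matrix [[1, −i, 0], [−i, 1, 0], [0, 0, 1]] (which is invertible over R since det g₁ = 2). For an upper triangular matrix b ∈ SL₃(R), the conjugate g₁ b g₁⁻¹ belongs to SO(3,R) if and only if b = diag(a, a⁻¹, 1) for some unit a ∈ R^×. -/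
/-!
Since `det g₁ = 2` is a unit, conjugation by `g₁` preserves the determinant, and `g₁ b g₁⁻¹` is
orthogonal iff `b` preserves the Gram matrix `g₁ᵀ g₁`, which is the split form
`u (x₀y₁ + x₁y₀) + x₂y₂` with `u = −2i` a unit. Comparing entries, an upper triangular `b`
preserving this form has `b₀₀ b₁₁ = 1` and, as `2u` is a unit, vanishing off-diagonal
entries; then `det b = 1` forces `b₂₂ = 1`.
-/

open Matrix

namespace Matrix

variable {n R : Type*} [Fintype n] [DecidableEq n] [CommRing R]

theorem transpose_mul_self_conj_eq_one_iff {g : Matrix n n R} (hg : IsUnit g) (b : Matrix n n R) :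
    (g * b * g⁻¹)ᵀ * (g * b * g⁻¹) = 1 ↔ bᵀ * (gᵀ * g) * b = gᵀ * g := by
  have hinv : IsUnit g⁻¹ := isUnit_nonsing_inv_iff.2 hg
  have hinvT : IsUnit g⁻¹ᵀ := (isUnit_transpose _).2 hinv
  have hgg : g * g⁻¹ = 1 := mul_nonsing_inv g ((isUnit_iff_isUnit_det g).1 hg)
  have hone : (1 : Matrix n n R) = g⁻¹ᵀ * (gᵀ * g) * g⁻¹ := by
    rw [← Matrix.mul_assoc, ← transpose_mul, Matrix.mul_assoc, hgg, transpose_one, Matrix.one_mul]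
  have hconj : (g * b * g⁻¹)ᵀ * (g * b * g⁻¹) = g⁻¹ᵀ * (bᵀ * (gᵀ * g) * b) * g⁻¹ := by
    simp only [transpose_mul, Matrix.mul_assoc]
  rw [hconj, hone, hinv.mul_left_inj, hinvT.mul_right_inj]

end Matrix

section SplitForm

variable {R : Type*} [CommRing R]

def splitForm (u : R) : Matrix (Fin 3) (Fin 3) R := !![0, u, 0; u, 0, 0; 0, 0, 1]

theorem UpperTri.transpose_mul_splitForm_mul {b : Matrix (Fin 3) (Fin 3) R} (hb : UpperTri b)
    (u : R) :
    bᵀ * splitForm u * b =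
      !![0, u * (b 0 0 * b 1 1), u * (b 0 0 * b 1 2);
        u * (b 0 0 * b 1 1), 2 * u * (b 0 1 * b 1 1), u * (b 0 1 * b 1 2 + b 1 1 * b 0 2);
        u * (b 0 0 * b 1 2), u * (b 0 1 * b 1 2 + b 1 1 * b 0 2),
          2 * u * (b 0 2 * b 1 2) + b 2 2 ^ 2] := by
  have h10 := hb 1 0 (by decide)
  have h20 := hb 2 0 (by decide)
  have h21 := hb 2 1 (by decide)
  ext i j
  fin_cases i <;> fin_cases j <;>
    simp [splitForm, mul_apply, Fin.sum_univ_three, h10, h20, h21] <;> ring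

theorem UpperTri.det_eq {b : Matrix (Fin 3) (Fin 3) R} (hb : UpperTri b) :
    b.det = b 0 0 * b 1 1 * b 2 2 := by
  rw [det_of_isUpperTriangular hb, Fin.prod_univ_three]

theorem UpperTri.transpose_mul_splitForm_mul_eq_iff {b : Matrix (Fin 3) (Fin 3) R}
    (hb : UpperTri b) (hdet : b.det = 1) {u : R} (hu : IsUnit u) (h2 : IsUnit (2 : R)) :
    bᵀ * splitForm u * b = splitForm u ↔ ∃ a : Rˣ, b = diagonal ![(a : R), ((a⁻¹ : Rˣ) : R), 1] := by
  rw [hb.transpose_mul_splitForm_mul, splitForm, ← Matrix.ext_iff]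
  constructor
  · intro h
    have h01 : b 0 0 * b 1 1 = 1 := hu.mul_left_cancel (by simpa using h 0 1)
    have h02 : b 0 0 * b 1 2 = 0 := hu.mul_left_cancel (by simpa using h 0 2)
    have h11 : b 0 1 * b 1 1 = 0 := (h2.mul hu).mul_left_cancel (by simpa using h 1 1)
    have h12 : b 0 1 * b 1 2 + b 1 1 * b 0 2 = 0 := hu.mul_left_cancel (by simpa using h 1 2)
    have hb12 : b 1 2 = 0 := by linear_combination b 1 1 * h02 - b 1 2 * h01
    have hb01 : b 0 1 = 0 := by linear_combination b 0 0 * h11 - b 0 1 * h01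
    have hb02 : b 0 2 = 0 := by
      linear_combination b 0 0 * h12 - b 0 0 * b 1 2 * hb01 - b 0 2 * h01
    have hb22 : b 2 2 = 1 := by linear_combination hb.det_eq.symm.trans hdet - b 2 2 * h01
    refine ⟨⟨b 0 0, b 1 1, h01, by rw [mul_comm, h01]⟩, ?_⟩
    ext i j
    fin_cases i <;> fin_cases j <;> simp [hb01, hb02, hb12, hb22, hb 1 0, hb 2 0, hb 2 1]
  · rintro ⟨a, rfl⟩ i j
    fin_cases i <;> fin_cases j <;> simp

abbrev g₁ (i : R) : Matrix (Fin 3) (Fin 3) R := !![1, -i, 0; -i, 1, 0; 0, 0, 1]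

theorem g₁_transpose_mul_self {i : R} (hi : i ^ 2 = -1) :
    (g₁ i)ᵀ * g₁ i = splitForm (-(2 * i)) := by
  ext j k
  fin_cases j <;> fin_cases k <;> simp [splitForm, mul_apply, Fin.sum_univ_three, ← sq, hi] <;> ring

theorem det_g₁ {i : R} (hi : i ^ 2 = -1) : (g₁ i).det = 2 := by
  simp [det_fin_three, ← sq, hi, one_add_one_eq_two]

end SplitForm

theorem conj_mem_SO3_iff {R : Type*} [CommRing R] (h2 : IsUnit (2 : R))
    (i : R) (hi : i ^ 2 = -1)
    (b : Matrix (Fin 3) (Fin 3) R) (hb : UpperTri b) (hdet : b.det = 1) :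
    SO3 (!![1, -i, 0; -i, 1, 0; 0, 0, 1] * b * (!![1, -i, 0; -i, 1, 0; 0, 0, 1])⁻¹)
      ↔ ∃ a : Rˣ, b = Matrix.diagonal ![(a : R), ((a⁻¹ : Rˣ) : R), 1] := by
  have hg : IsUnit (g₁ i) := by
    rw [isUnit_iff_isUnit_det, det_g₁ hi]
    exact h2
  have hi_unit : IsUnit i := IsUnit.of_mul_eq_one (-i) (by linear_combination -hi)
  rw [SO3, det_conj hg, hdet, eq_self, and_true, transpose_mul_self_conj_eq_one_iff hg,
    g₁_transpose_mul_self hi]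
  exact hb.transpose_mul_splitForm_mul_eq_iff hdet (h2.mul hi_unit).neg h2
end

section
/- Let F be an algebraically closed field of characteristic different from 2, fix i ∈ F with i² = −1, and let g₂ = [[1, 0, 0], [0, 1, −i], [0, −i, 1]]. For g ∈ SL₃(F), there exist k ∈ SO(3,F) and an upper triangular matrix b ∈ GL₃(F) with g = k g₂ b if and only if c₁(g) ≠ 0 and c₂(g) = 0. -/
open Matrix

/-!
Statement 13: Over an algebraically closed field `F` of characteristic ≠ 2 with a
fixed `i` satisfying `i² = −1`, and `g₂ = [[1,0,0],[0,1,−i],[0,−i,1]]`, a matrix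
`g ∈ SL₃(F)` factors as `g = k g₂ b` with `k ∈ SO(3,F)` and `b` upper triangular
invertible iff `c₁(g) ≠ 0` and `c₂(g) = 0`.
-/


section Aux
variable {F : Type*} [Field F]

private lemma bil_eq_dot (v w : Fin 3 → F) : bil v w = v ⬝ᵥ w := rfl

private lemma bil_expand (v w : Fin 3 → F) : bil v w = v 0 * w 0 + v 1 * w 1 + v 2 * w 2 := by
  simp [bil, Fin.sum_univ_three]

private lemma bil_comm (v w : Fin 3 → F) : bil v w = bil w v := by simp [bil_expand]; ring
private lemma bil_add_left (v w u : Fin 3 → F) : bil (v + w) u = bil v u + bil w u := by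
  simp [bil_expand]; ring
private lemma bil_sub_left (v w u : Fin 3 → F) : bil (v - w) u = bil v u - bil w u := by
  simp [bil_expand]; ring
private lemma bil_smul_left (c : F) (v u : Fin 3 → F) : bil (c • v) u = c * bil v u := by
  simp [bil_expand]; ring
private lemma bil_add_right (v w u : Fin 3 → F) : bil u (v + w) = bil u v + bil u w := by
  simp [bil_expand]; ring
private lemma bil_sub_right (v w u : Fin 3 → F) : bil u (v - w) = bil u v - bil u w := by
  simp [bil_expand]; ring
private lemma bil_smul_right (c : F) (v u : Fin 3 → F) : bil u (c • v) = c * bil u v := by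
  simp [bil_expand]; ring

private lemma bil_mulVec_s13 (k : Matrix (Fin 3) (Fin 3) F) (hk : kᵀ * k = 1) (x y : Fin 3 → F) :
    bil (k *ᵥ x) (k *ᵥ y) = bil x y := by
  rw [bil_eq_dot, bil_eq_dot, Matrix.dotProduct_mulVec, ← Matrix.vecMul_transpose,
    Matrix.vecMul_vecMul, hk, Matrix.vecMul_one]

private lemma vcol_mul_s13 (A B : Matrix (Fin 3) (Fin 3) F) (c : Fin 3) :
    vcol (A * B) c = A *ᵥ (vcol B c) := by
  funext j; simp [vcol, Matrix.mul_apply, Matrix.mulVec, dotProduct]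

end Aux

theorem factorization_middle_orbit_two {F : Type*} [Field F] [IsAlgClosed F]
    (hchar : (2 : F) ≠ 0) (i : F) (hi : i ^ 2 = -1)
    (g : Matrix (Fin 3) (Fin 3) F) (hg : g.det = 1) :
    (∃ k b : Matrix (Fin 3) (Fin 3) F, SO3 k ∧ UpperTri b ∧ IsUnit b.det ∧
        g = k * !![1, 0, 0; 0, 1, -i; 0, -i, 1] * b)
      ↔ (c1 g ≠ 0 ∧ c2 g = 0) := by
  constructor
  · rintro ⟨k, b, ⟨hkO, hkdet⟩, hb, hbu, heq⟩
    set g2 : Matrix (Fin 3) (Fin 3) F := !![1, 0, 0; 0, 1, -i; 0, -i, 1] with hg2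
    have hb10 : b 1 0 = 0 := hb 1 0 (by decide)
    have hb20 : b 2 0 = 0 := hb 2 0 (by decide)
    have hb21 : b 2 1 = 0 := hb 2 1 (by decide)
    have heq' : g = k * (g2 * b) := by rw [heq, Matrix.mul_assoc]
    have hw0 : vcol (g2 * b) 0 = ![b 0 0, 0, 0] := by
      funext j; fin_cases j <;>
        simp [vcol, Matrix.mul_apply, Fin.sum_univ_three, hg2, hb10, hb20]
    have hw1 : vcol (g2 * b) 1 = ![b 0 1, b 1 1, -i * b 1 1] := by
      funext j; fin_cases j <;>
        simp [vcol, Matrix.mul_apply, Fin.sum_univ_three, hg2, hb10, hb20, hb21]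
    have hc0 : vcol g 0 = k *ᵥ ![b 0 0, 0, 0] := by rw [heq', vcol_mul_s13, hw0]
    have hc1 : vcol g 1 = k *ᵥ ![b 0 1, b 1 1, -i * b 1 1] := by rw [heq', vcol_mul_s13, hw1]
    have e00 : bil (vcol g 0) (vcol g 0) = b 0 0 * b 0 0 := by
      rw [hc0, bil_mulVec_s13 k hkO, bil_expand]; simp
    have e01 : bil (vcol g 0) (vcol g 1) = b 0 0 * b 0 1 := by
      rw [hc0, hc1, bil_mulVec_s13 k hkO, bil_expand]; simp
    have e11 : bil (vcol g 1) (vcol g 1) = b 0 1 * b 0 1 := by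
      rw [hc1, bil_mulVec_s13 k hkO, bil_expand]; simp; linear_combination (b 1 1)^2 * hi
    have hb00 : b 0 0 ≠ 0 := by
      intro h0
      have hdb : b.det = 0 := by
        rw [Matrix.det_fin_three, h0, hb10, hb20]; ring
      rw [hdb] at hbu; exact (not_isUnit_zero : ¬ IsUnit (0:F)) hbu
    constructor
    · rw [c1, e00]; exact mul_ne_zero hb00 hb00
    · rw [c2, e00, e01, e11]; ring
  · rintro ⟨hc1, hc2⟩
    -- the isotropic vector e
    set e : Fin 3 → F := c1 g • vcol g 1 - c3 g • vcol g 0 with hedef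
    have hee : bil e e = 0 := by
      rw [hedef]
      simp only [bil_sub_left, bil_sub_right, bil_smul_left, bil_smul_right]
      simp only [c1, c2, c3] at hc2 ⊢
      rw [bil_comm (vcol g 1) (vcol g 0)]
      linear_combination (bil (vcol g 0) (vcol g 0)) * hc2
    have hv1e : bil (vcol g 0) e = 0 := by
      rw [hedef]
      simp only [bil_sub_right, bil_smul_right, c1, c3]
      ring
    have he0 : e ≠ 0 := by
      intro h
      have hj : ∀ j, c1 g * g j 1 - c3 g * g j 0 = 0 := by
        intro j
        have := congrFun h j
        simpa [hedef, vcol, sub_eq_zero] using sub_eq_zero.mpr this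
      apply hc1
      have hd := hg
      rw [Matrix.det_fin_three] at hd
      linear_combination (-(c1 g)) * hd +
        (-(g 1 0 * g 2 2 - g 1 2 * g 2 0)) * hj 0 +
        (g 0 0 * g 2 2 - g 0 2 * g 2 0) * hj 1 +
        (-(g 0 0 * g 1 2 - g 0 2 * g 1 0)) * hj 2
    -- square root of c1
    have h2 : (2:F)⁻¹ * 2 = 1 := inv_mul_cancel₀ hchar
    obtain ⟨a, ha⟩ : ∃ a : F, a ^ 2 = c1 g := IsAlgClosed.exists_pow_nat_eq (c1 g) (n := 2) (by norm_num)
    have hane : a ≠ 0 := by intro h; rw [h] at ha; simp at ha; exact hc1 ha.symm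
    obtain ⟨k1, hk1def⟩ : ∃ v : Fin 3 → F, v = a⁻¹ • vcol g 0 := ⟨_, rfl⟩
    have h11 : bil k1 k1 = 1 := by
      rw [hk1def, bil_smul_left, bil_smul_right]
      rw [show bil (vcol g 0) (vcol g 0) = c1 g from rfl, ← ha]
      field_simp
    have h1e : bil k1 e = 0 := by
      rw [hk1def, bil_smul_left, hv1e, mul_zero]
    -- a coordinate where e is nonzero
    obtain ⟨j0, hj0⟩ : ∃ j, e j ≠ 0 := by
      by_contra h; push_neg at h; exact he0 (funext h)
    obtain ⟨x, hxdef⟩ : ∃ v : Fin 3 → F, v = Pi.single j0 1 := ⟨_, rfl⟩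
    have hex : bil e x = e j0 := by
      rw [hxdef, bil_expand]
      fin_cases j0 <;> simp
    obtain ⟨x', hx'def⟩ : ∃ v : Fin 3 → F, v = x - bil k1 x • k1 := ⟨_, rfl⟩
    have h1x' : bil k1 x' = 0 := by
      rw [hx'def, bil_sub_right, bil_smul_right, h11]; ring
    have hex' : bil e x' = e j0 := by
      rw [hx'def, bil_sub_right, bil_smul_right, bil_comm e k1, h1e, hex]; ring
    obtain ⟨f0, hf0def⟩ : ∃ v : Fin 3 → F, v = (e j0)⁻¹ • x' := ⟨_, rfl⟩
    have h1f0 : bil k1 f0 = 0 := by rw [hf0def, bil_smul_right, h1x']; ring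
    have hef0 : bil e f0 = 1 := by
      rw [hf0def, bil_smul_right, hex']; field_simp
    obtain ⟨f, hfdef⟩ : ∃ v : Fin 3 → F, v = f0 - (bil f0 f0 / 2) • e := ⟨_, rfl⟩
    have h1f : bil k1 f = 0 := by
      rw [hfdef, bil_sub_right, bil_smul_right, h1f0, h1e]; ring
    have hef : bil e f = 1 := by
      rw [hfdef, bil_sub_right, bil_smul_right, hef0, hee]; ring
    have hff : bil f f = 0 := by
      rw [hfdef]
      simp only [bil_sub_left, bil_sub_right, bil_smul_left, bil_smul_right]
      rw [hee, hef0, bil_comm f0 e, hef0]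
      linear_combination (-(bil f0 f0)) * h2
    -- the orthonormal pair spanning k1-perp
    obtain ⟨k2, hk2def⟩ : ∃ v : Fin 3 → F, v = f + (2:F)⁻¹ • e := ⟨_, rfl⟩
    obtain ⟨k3, hk3def⟩ : ∃ v : Fin 3 → F, v = (-i) • f + (i/2) • e := ⟨_, rfl⟩
    have h12 : bil k1 k2 = 0 := by
      rw [hk2def, bil_add_right, bil_smul_right, h1f, h1e]; ring
    have h13 : bil k1 k3 = 0 := by
      rw [hk3def, bil_add_right, bil_smul_right, bil_smul_right, h1f, h1e]; ring
    have h22 : bil k2 k2 = 1 := by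
      rw [hk2def]
      simp only [bil_add_left, bil_add_right, bil_smul_left, bil_smul_right]
      rw [hff, hee, hef, bil_comm f e, hef]
      linear_combination h2
    have h33 : bil k3 k3 = 1 := by
      rw [hk3def]
      simp only [bil_add_left, bil_add_right, bil_smul_left, bil_smul_right]
      rw [hff, hee, hef, bil_comm f e, hef]
      linear_combination -hi - i^2 * h2
    have h23 : bil k2 k3 = 0 := by
      rw [hk2def, hk3def]
      simp only [bil_add_left, bil_add_right, bil_smul_left, bil_smul_right]
      rw [hff, hee, hef, bil_comm f e, hef]
      ring
    have hk2k3e : ∀ j, k2 j - i * k3 j = e j := by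
      intro j
      rw [hk2def, hk3def]
      simp only [Pi.add_apply, Pi.smul_apply, smul_eq_mul]
      linear_combination (f j - e j * (2:F)⁻¹) * hi + e j * h2
    -- expanded orthonormality equations
    have E11 : k1 0 * k1 0 + k1 1 * k1 1 + k1 2 * k1 2 = 1 := by rw [← bil_expand]; exact h11
    have E22 : k2 0 * k2 0 + k2 1 * k2 1 + k2 2 * k2 2 = 1 := by rw [← bil_expand]; exact h22
    have E33 : k3 0 * k3 0 + k3 1 * k3 1 + k3 2 * k3 2 = 1 := by rw [← bil_expand]; exact h33
    have E12 : k1 0 * k2 0 + k1 1 * k2 1 + k1 2 * k2 2 = 0 := by rw [← bil_expand]; exact h12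
    have E13 : k1 0 * k3 0 + k1 1 * k3 1 + k1 2 * k3 2 = 0 := by rw [← bil_expand]; exact h13
    have E23 : k2 0 * k3 0 + k2 1 * k3 1 + k2 2 * k3 2 = 0 := by rw [← bil_expand]; exact h23
    obtain ⟨K, hKdef⟩ : ∃ M : Matrix (Fin 3) (Fin 3) F,
        M = !![k1 0, k2 0, k3 0; k1 1, k2 1, k3 1; k1 2, k2 2, k3 2] := ⟨_, rfl⟩
    have hKO : Kᵀ * K = 1 := by
      rw [hKdef]
      ext r c
      fin_cases r <;> fin_cases c <;>
        simp only [Matrix.mul_apply, Matrix.transpose_apply, Fin.sum_univ_three,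
          Matrix.cons_val', Matrix.cons_val_zero, Matrix.cons_val_one, Matrix.head_cons,
          Matrix.head_fin_const, Matrix.cons_val_fin_one, Matrix.empty_val',
          Matrix.one_apply, Matrix.cons_val_two, Matrix.tail_cons, Matrix.of_apply] <;>
        norm_num [Fin.ext_iff] <;>
        first
          | linear_combination E11
          | linear_combination E12
          | linear_combination E13
          | linear_combination E22
          | linear_combination E23
          | linear_combination E33
    have hdd : K.det * K.det = 1 := by
      have h := congrArg Matrix.det hKO
      rwa [Matrix.det_mul, Matrix.det_transpose, Matrix.det_one] at h
    obtain ⟨K', hK'def⟩ : ∃ M : Matrix (Fin 3) (Fin 3) F,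
        M = !![K.det * k1 0, k2 0, k3 0; K.det * k1 1, k2 1, k3 1; K.det * k1 2, k2 2, k3 2] :=
      ⟨_, rfl⟩
    have hK'O : K'ᵀ * K' = 1 := by
      rw [hK'def]
      ext r c
      fin_cases r <;> fin_cases c <;>
        simp only [Matrix.mul_apply, Matrix.transpose_apply, Fin.sum_univ_three,
          Matrix.cons_val', Matrix.cons_val_zero, Matrix.cons_val_one, Matrix.head_cons,
          Matrix.head_fin_const, Matrix.cons_val_fin_one, Matrix.empty_val',
          Matrix.one_apply, Matrix.cons_val_two, Matrix.tail_cons, Matrix.of_apply] <;>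
        norm_num [Fin.ext_iff] <;>
        first
          | linear_combination (K.det * K.det) * E11 + hdd
          | linear_combination K.det * E12
          | linear_combination K.det * E13
          | linear_combination E22
          | linear_combination E23
          | linear_combination E33
    have hK'det : K'.det = 1 := by
      have hKK : K'.det = K.det * K.det := by
        rw [hK'def]
        rw [show K.det = (!![k1 0, k2 0, k3 0; k1 1, k2 1, k3 1; k1 2, k2 2, k3 2] :
          Matrix (Fin 3) (Fin 3) F).det from by rw [← hKdef]]
        simp [Matrix.det_fin_three]
        ring
      rw [hKK, hdd]
    have hainv : a⁻¹ * a = 1 := inv_mul_cancel₀ hane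
    have hc1inv : (c1 g)⁻¹ * c1 g = 1 := inv_mul_cancel₀ hc1
    obtain ⟨g2, hg2def⟩ : ∃ M : Matrix (Fin 3) (Fin 3) F,
        M = !![1, 0, 0; 0, 1, -i; 0, -i, 1] := ⟨_, rfl⟩
    have hg2det : g2.det = 2 := by
      rw [hg2def]; simp [Matrix.det_fin_three]; linear_combination -hi
    obtain ⟨M, hMdef⟩ : ∃ N : Matrix (Fin 3) (Fin 3) F, N = K' * g2 := ⟨_, rfl⟩
    have hMdet : M.det = 2 := by
      rw [hMdef, Matrix.det_mul, hK'det, hg2det, one_mul]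
    have hMu : IsUnit M.det := isUnit_iff_ne_zero.mpr (by rw [hMdet]; exact hchar)
    -- columns of M
    have hM0 : ∀ j, M j 0 = K.det * k1 j := by
      intro j
      rw [hMdef, hg2def, hK'def]
      fin_cases j <;>
        simp [Matrix.mul_apply, Fin.sum_univ_three, Matrix.vecHead, Matrix.vecTail]
    have hM1 : ∀ j, M j 1 = e j := by
      intro j
      rw [hMdef, hg2def, hK'def]
      fin_cases j <;>
        simp [Matrix.mul_apply, Fin.sum_univ_three, Matrix.vecHead, Matrix.vecTail] <;>
        first
          | linear_combination hk2k3e 0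
          | linear_combination hk2k3e 1
          | linear_combination hk2k3e 2
    have hk1j : ∀ j, k1 j = a⁻¹ * g j 0 := by
      intro j
      rw [hk1def]
      simp [vcol]
    have hej : ∀ j, e j = c1 g * g j 1 - c3 g * g j 0 := by
      intro j
      rw [hedef]
      simp [vcol]
    have hMv0 : M *ᵥ ![K.det * a, 0, 0] = vcol g 0 := by
      funext j
      simp only [Matrix.mulVec, dotProduct, Fin.sum_univ_three, Matrix.cons_val_zero,
        Matrix.cons_val_one, Matrix.head_cons, Matrix.cons_val_two, Matrix.tail_cons,
        mul_zero, add_zero]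
      rw [hM0 j, hk1j j]
      show _ = g j 0
      linear_combination (a⁻¹ * a * g j 0) * hdd + (g j 0) * hainv
    have hMv1 : M *ᵥ ![K.det * a * c3 g * (c1 g)⁻¹, (c1 g)⁻¹, 0] = vcol g 1 := by
      funext j
      simp only [Matrix.mulVec, dotProduct, Fin.sum_univ_three, Matrix.cons_val_zero,
        Matrix.cons_val_one, Matrix.head_cons, Matrix.cons_val_two, Matrix.tail_cons,
        mul_zero, add_zero]
      rw [hM0 j, hM1 j, hk1j j, hej j]
      show _ = g j 1
      linear_combination (a⁻¹ * a * c3 g * (c1 g)⁻¹ * g j 0) * hdd +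
        (c3 g * (c1 g)⁻¹ * g j 0) * hainv + g j 1 * hc1inv
    obtain ⟨b, hbdef⟩ : ∃ N : Matrix (Fin 3) (Fin 3) F, N = M⁻¹ * g := ⟨_, rfl⟩
    have hfact : g = K' * g2 * b := by
      rw [hbdef, ← hMdef, Matrix.mul_nonsing_inv_cancel_left M g hMu]
    have hbc0 : ∀ j, b j 0 = (![K.det * a, 0, 0] : Fin 3 → F) j := by
      intro j
      have h1 : M⁻¹ *ᵥ vcol g 0 = ![K.det * a, 0, 0] := by
        rw [← hMv0, Matrix.mulVec_mulVec, Matrix.nonsing_inv_mul M hMu, Matrix.one_mulVec]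
      have h2 : b j 0 = (M⁻¹ *ᵥ vcol g 0) j := by
        rw [hbdef]
        simp [Matrix.mul_apply, Matrix.mulVec, dotProduct, vcol]
      rw [h2, h1]
    have hbc1 : ∀ j, b j 1 = (![K.det * a * c3 g * (c1 g)⁻¹, (c1 g)⁻¹, 0] : Fin 3 → F) j := by
      intro j
      have h1 : M⁻¹ *ᵥ vcol g 1 = ![K.det * a * c3 g * (c1 g)⁻¹, (c1 g)⁻¹, 0] := by
        rw [← hMv1, Matrix.mulVec_mulVec, Matrix.nonsing_inv_mul M hMu, Matrix.one_mulVec]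
      have h2 : b j 1 = (M⁻¹ *ᵥ vcol g 1) j := by
        rw [hbdef]
        simp [Matrix.mul_apply, Matrix.mulVec, dotProduct, vcol]
      rw [h2, h1]
    have hUT : ∀ r c : Fin 3, c < r → b r c = 0 := by
      intro r c hrc
      fin_cases r <;> fin_cases c <;>
        first
          | exact absurd hrc (by decide)
          | simpa using hbc0 1
          | simpa using hbc0 2
          | simpa using hbc1 2
    have hbu : IsUnit b.det := by
      have hdetb := congrArg Matrix.det hfact
      rw [hg, Matrix.det_mul, Matrix.det_mul] at hdetb
      refine isUnit_iff_ne_zero.mpr fun h0 => ?_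
      rw [h0, mul_zero] at hdetb
      exact one_ne_zero hdetb
    rw [hg2def] at hfact
    exact ⟨K', b, ⟨hK'O, hK'det⟩, hUT, hbu, hfact⟩
end

section
/- Let R be a commutative ring in which 2 is invertible and g ∈ SL₃(R). Then the conjugate subgroup g B_std(R) g⁻¹ of SL₃(R) is stable under the involution θ : h ↦ (hᵀ)⁻¹ (i.e., {(hᵀ)⁻¹ : h ∈ g B_std(R) g⁻¹} = g B_std(R) g⁻¹) if and only if c₁(g) = 0 and c₃(g) = 0. -/
open Matrix

/-!
Statement 16: Over a commutative ring `R` with `2` invertible and `g ∈ SL₃(R)`, the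
conjugate subgroup `g B_std(R) g⁻¹` is stable under the involution `θ : h ↦ (hᵀ)⁻¹`
iff `c₁(g) = 0` and `c₃(g) = 0`.
-/

theorem theta_stable_iff {R : Type*} [CommRing R] (h2 : IsUnit (2 : R))
    (g : Matrix (Fin 3) (Fin 3) R) (hg : g.det = 1) :
    ((fun h : Matrix (Fin 3) (Fin 3) R => (hᵀ)⁻¹) ''
        {h | ∃ b, UpperTri b ∧ b.det = 1 ∧ h = g * b * g⁻¹}
      = {h | ∃ b, UpperTri b ∧ b.det = 1 ∧ h = g * b * g⁻¹})
      ↔ (c1 g = 0 ∧ c3 g = 0) := by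
  have hdetg : IsUnit g.det := by rw [hg]; exact isUnit_one
  obtain ⟨s, hs⟩ : ∃ s : Matrix (Fin 3) (Fin 3) R, s = gᵀ * g := ⟨_, rfl⟩
  have hdets : s.det = 1 := by
    rw [hs, det_mul, det_transpose, hg, one_mul]
  have hsymm : sᵀ = s := by rw [hs, transpose_mul, transpose_transpose]
  have hgg : g * g⁻¹ = 1 := mul_nonsing_inv g hdetg
  have hgg' : g⁻¹ * g = 1 := nonsing_inv_mul g hdetg
  have h1 : s * s.adjugate = 1 := by rw [mul_adjugate, hdets, one_smul]
  have h1' : s.adjugate * s = 1 := by rw [adjugate_mul, hdets, one_smul]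
  -- the key identity θ(g b g⁻¹) = g (adj s · adj bᵀ · s) g⁻¹
  have key : ∀ b : Matrix (Fin 3) (Fin 3) R, b.det = 1 →
      ((g * b * g⁻¹)ᵀ)⁻¹ = g * (s.adjugate * bᵀ.adjugate * s) * g⁻¹ := by
    intro b hbd
    apply inv_eq_right_inv
    have h2b : bᵀ * bᵀ.adjugate = 1 := by
      rw [mul_adjugate, det_transpose, hbd, one_smul]
    have e1 : ∀ X : Matrix (Fin 3) (Fin 3) R, gᵀ * (g * (s.adjugate * X)) = X := by
      intro X
      rw [← Matrix.mul_assoc gᵀ g, ← hs, ← Matrix.mul_assoc s, h1, Matrix.one_mul]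
    have e2 : ∀ X : Matrix (Fin 3) (Fin 3) R, bᵀ * (bᵀ.adjugate * X) = X := by
      intro X
      rw [← Matrix.mul_assoc, h2b, Matrix.one_mul]
    have e3 : (g⁻¹)ᵀ * (s * g⁻¹) = 1 := by
      rw [hs, Matrix.mul_assoc gᵀ g g⁻¹, hgg, Matrix.mul_one, ← transpose_mul, hgg,
        transpose_one]
    calc (g * b * g⁻¹)ᵀ * (g * (s.adjugate * bᵀ.adjugate * s) * g⁻¹)
        = (g⁻¹)ᵀ * (bᵀ * (gᵀ * (g * (s.adjugate * (bᵀ.adjugate * (s * g⁻¹)))))) := by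
          simp only [transpose_mul, Matrix.mul_assoc]
      _ = 1 := by rw [e1, e2, e3]
  have hred : ∀ Z : Matrix (Fin 3) (Fin 3) R, g⁻¹ * (g * Z * g⁻¹) * g = Z := by
    intro Z
    calc g⁻¹ * (g * Z * g⁻¹) * g = g⁻¹ * (g * (Z * (g⁻¹ * g))) := by
          simp only [Matrix.mul_assoc]
      _ = Z := by rw [hgg', Matrix.mul_one, ← Matrix.mul_assoc, hgg', Matrix.one_mul]
  have cancel : ∀ X Y : Matrix (Fin 3) (Fin 3) R,
      g * X * g⁻¹ = g * Y * g⁻¹ → X = Y := by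
    intro X Y hXY
    calc X = g⁻¹ * (g * X * g⁻¹) * g := (hred X).symm
      _ = g⁻¹ * (g * Y * g⁻¹) * g := by rw [hXY]
      _ = Y := hred Y
  have hdetPhi : ∀ b : Matrix (Fin 3) (Fin 3) R, b.det = 1 →
      (s.adjugate * bᵀ.adjugate * s).det = 1 := by
    intro b hbd
    rw [det_mul, det_mul, det_adjugate, det_adjugate, det_transpose, hbd, hdets]
    norm_num
  -- symmetry facts for entries of s
  have e10 : s 1 0 = s 0 1 := by
    have h := congrFun (congrFun hsymm 0) 1; simpa using h
  have e20 : s 2 0 = s 0 2 := by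
    have h := congrFun (congrFun hsymm 0) 2; simpa using h
  have e21 : s 2 1 = s 1 2 := by
    have h := congrFun (congrFun hsymm 1) 2; simpa using h
  have hc1 : c1 g = s 0 0 := by
    simp [c1, bil, vcol, hs, Matrix.mul_apply, Matrix.transpose_apply]
  have hc3 : c3 g = s 0 1 := by
    simp [c3, bil, vcol, hs, Matrix.mul_apply, Matrix.transpose_apply]
  have tri : ∀ M : Matrix (Fin 3) (Fin 3) R,
      M 1 0 = 0 → M 2 0 = 0 → M 2 1 = 0 → UpperTri M := by
    intro M m10 m20 m21 i j hij
    fin_cases i <;> fin_cases j <;> first | exact absurd hij (by decide) | assumption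
  constructor
  · -- forward direction
    intro hS
    have F : ∀ b : Matrix (Fin 3) (Fin 3) R, UpperTri b → b.det = 1 →
        UpperTri (s.adjugate * bᵀ.adjugate * s) := by
      intro b hbu hbd
      have hmem : ((g * b * g⁻¹)ᵀ)⁻¹ ∈
          ((fun h : Matrix (Fin 3) (Fin 3) R => (hᵀ)⁻¹) ''
            {h | ∃ b, UpperTri b ∧ b.det = 1 ∧ h = g * b * g⁻¹}) :=
        ⟨g * b * g⁻¹, ⟨b, hbu, hbd, rfl⟩, rfl⟩
      rw [hS] at hmem
      obtain ⟨b', hb'u, hb'd, heq⟩ := hmem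
      rw [key b hbd] at heq
      have h := cancel _ _ heq
      rw [h]; exact hb'u
    have T1 := F !![1,-1,0; 0,1,0; 0,0,1]
      (tri _ rfl rfl rfl)
      (by norm_num [Matrix.det_fin_three, Matrix.vecHead, Matrix.vecTail, Matrix.cons_val_two])
    have T2 := F !![1,0,-1; 0,1,0; 0,0,1]
      (tri _ rfl rfl rfl)
      (by norm_num [Matrix.det_fin_three, Matrix.vecHead, Matrix.vecTail, Matrix.cons_val_two])
    have T3 := F !![1,0,0; 0,1,-1; 0,0,1]
      (tri _ rfl rfl rfl)
      (by norm_num [Matrix.det_fin_three, Matrix.vecHead, Matrix.vecTail, Matrix.cons_val_two])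
    have T5 := F !![1,0,0; 0,-1,0; 0,0,-1]
      (tri _ rfl rfl rfl)
      (by norm_num [Matrix.det_fin_three, Matrix.vecHead, Matrix.vecTail, Matrix.cons_val_two])
    have H2 := T1 2 0 (by decide)
    have H3 := T1 2 1 (by decide)
    have H4 := T2 2 0 (by decide)
    have H5 := T2 2 1 (by decide)
    have H6 := T3 2 1 (by decide)
    have H12 := T5 2 1 (by decide)
    simp only [Matrix.mul_apply, Matrix.adjugate_fin_three, Fin.sum_univ_three,
      Matrix.transpose_apply, Matrix.cons_val', Matrix.cons_val_zero, Matrix.cons_val_one,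
      Matrix.head_cons, Matrix.head_fin_const, Matrix.cons_val_fin_one, Matrix.empty_val',
      Matrix.cons_val_two, Matrix.tail_cons, Matrix.of_apply] at H2 H3 H4 H5 H6 H12
    rw [e10, e20, e21] at H2 H3 H4 H5 H6 H12
    have hdetE := hdets
    rw [Matrix.det_fin_three] at hdetE
    rw [e10, e20, e21] at hdetE
    set a := s 0 0
    set b := s 0 1
    set c := s 0 2
    set d := s 1 1
    set e := s 1 2
    set f := s 2 2
    have hq : a * d - b * b = 0 := by
      linear_combination (d*f - e*e) * H4 + (2*c*e - b*f) * H5 - c*c * H6 -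
        (a*d - b*b) * hdetE
    have ha : a = 0 := by
      linear_combination (a*f - c*c) * hq + e * H2 - c * H3 - a * hdetE
    have hb2 : b * b = 0 := by linear_combination d * ha - hq
    obtain ⟨u, hu⟩ := h2
    have ht : (↑u⁻¹ : R) * 2 = 1 := by rw [← hu, Units.inv_mul]
    have hbcd : b * c * d = 0 := by
      linear_combination (-(↑u⁻¹ : R)) * H12 + (2 * (↑u⁻¹ : R) * e) * hb2 -
        (b*c*d) * ht
    have hb : b = 0 := by
      linear_combination (b*d*f - b*e*e) * ha + (2*c*e - b*f) * hb2 - c * hbcd -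
        b * hdetE
    exact ⟨hc1 ▸ ha, hc3 ▸ hb⟩
  · -- backward direction
    rintro ⟨hc1', hc3'⟩
    have h00 : s 0 0 = 0 := by rw [← hc1]; exact hc1'
    have h01 : s 0 1 = 0 := by rw [← hc3]; exact hc3'
    have h10 : s 1 0 = 0 := by rw [e10]; exact h01
    have hUT : ∀ b : Matrix (Fin 3) (Fin 3) R, UpperTri b →
        UpperTri (s.adjugate * bᵀ.adjugate * s) := by
      intro b hbu
      have b10 : b 1 0 = 0 := hbu 1 0 (by decide)
      have b20 : b 2 0 = 0 := hbu 2 0 (by decide)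
      have b21 : b 2 1 = 0 := hbu 2 1 (by decide)
      have k10 : (s.adjugate * bᵀ.adjugate * s) 1 0 = 0 := by
        simp only [Matrix.mul_apply, Matrix.adjugate_fin_three, Fin.sum_univ_three,
          Matrix.transpose_apply, Matrix.cons_val', Matrix.cons_val_zero, Matrix.cons_val_one,
          Matrix.head_cons, Matrix.cons_val_fin_one, Matrix.empty_val',
          Matrix.cons_val_two, Matrix.tail_cons, Matrix.of_apply,
          Matrix.vecHead, Matrix.vecTail, Function.comp, Matrix.cons_val_succ]
        simp only [e10, e20, e21, h00, h01, b10, b20, b21]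
        ring
      have k20 : (s.adjugate * bᵀ.adjugate * s) 2 0 = 0 := by
        simp only [Matrix.mul_apply, Matrix.adjugate_fin_three, Fin.sum_univ_three,
          Matrix.transpose_apply, Matrix.cons_val', Matrix.cons_val_zero, Matrix.cons_val_one,
          Matrix.head_cons, Matrix.cons_val_fin_one, Matrix.empty_val',
          Matrix.cons_val_two, Matrix.tail_cons, Matrix.of_apply,
          Matrix.vecHead, Matrix.vecTail, Function.comp, Matrix.cons_val_succ]
        simp only [e10, e20, e21, h00, h01, b10, b20, b21]
        ring
      have k21 : (s.adjugate * bᵀ.adjugate * s) 2 1 = 0 := by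
        simp only [Matrix.mul_apply, Matrix.adjugate_fin_three, Fin.sum_univ_three,
          Matrix.transpose_apply, Matrix.cons_val', Matrix.cons_val_zero, Matrix.cons_val_one,
          Matrix.head_cons, Matrix.cons_val_fin_one, Matrix.empty_val',
          Matrix.cons_val_two, Matrix.tail_cons, Matrix.of_apply,
          Matrix.vecHead, Matrix.vecTail, Function.comp, Matrix.cons_val_succ]
        simp only [e10, e20, e21, h00, h01, b10, b20, b21]
        ring
      exact tri _ k10 k20 k21
    have hinvol : ∀ b : Matrix (Fin 3) (Fin 3) R, b.det = 1 →
        s.adjugate * (s.adjugate * bᵀ.adjugate * s)ᵀ.adjugate * s = b := by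
      intro b hbd
      have hcard : Fintype.card (Fin 3) ≠ 1 := by simp
      have hads : (s.adjugate).adjugate = s := by
        rw [adjugate_adjugate s hcard, hdets]
        simp
      have hadb : (b.adjugate).adjugate = b := by
        rw [adjugate_adjugate b hcard, hbd]
        simp
      have htr : (s.adjugate * bᵀ.adjugate * s)ᵀ = s * (b.adjugate * s.adjugate) := by
        rw [transpose_mul, transpose_mul, adjugate_transpose, adjugate_transpose,
          transpose_transpose, hsymm]
      rw [htr, adjugate_mul_distrib, adjugate_mul_distrib, hads, hadb]
      calc s.adjugate * (s * b * s.adjugate) * s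
          = (s.adjugate * s) * b * (s.adjugate * s) := by
            simp only [Matrix.mul_assoc]
        _ = b := by rw [h1', Matrix.one_mul, Matrix.mul_one]
    ext x
    constructor
    · rintro ⟨y, ⟨b, hbu, hbd, rfl⟩, rfl⟩
      exact ⟨_, hUT b hbu, hdetPhi b hbd, key b hbd⟩
    · rintro ⟨b, hbu, hbd, rfl⟩
      refine ⟨g * (s.adjugate * bᵀ.adjugate * s) * g⁻¹,
        ⟨_, hUT b hbu, hdetPhi b hbd, rfl⟩, ?_⟩
      show ((g * (s.adjugate * bᵀ.adjugate * s) * g⁻¹)ᵀ)⁻¹ = g * b * g⁻¹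
      rw [key _ (hdetPhi b hbd), hinvol b hbd]
end

section
/- Let F be an algebraically closed field of characteristic different from 2. Then every full flag 0 ⊂ Fv₁ ⊂ V₂ ⊂ F³ satisfies exactly one of the four properties (O), (LC1), (LC2), (C). -/
open Matrix

/-!
(O) and (LC2) are complementary once `(v₁,v₁) ≠ 0`, so the real content is that (LC1) and (C)
are complementary once `(v₁,v₁) = 0`. A line cannot fill the plane `V₂`, so (LC1) excludes (C).
Conversely, if `(v₁,·)` does not vanish on `V₂`, then `v₁ ≠ 0`, and a vector `v ∈ V₂` off the
line `F v₁` with `(v₁,v) = 0` would span `V₂` together with `v₁`, forcing `(v₁,·)` to vanish on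
`V₂`.
-/

open Module Submodule

section Plane

variable {K M : Type*} [DivisionRing K] [AddCommGroup M] [Module K M] {V : Submodule K M}

theorem exists_mem_notMem_span_singleton_of_one_lt_finrank (hV : 1 < finrank K V) (x : M) :
    ∃ v ∈ V, v ∉ K ∙ x := by
  by_contra! h
  have hle := Submodule.finrank_mono (show V ≤ K ∙ x from h)
  have hx : finrank K (K ∙ x) ≤ 1 := by simpa using finrank_span_le_card (R := K) {x}
  omega

theorem span_pair_eq_of_finrank_eq_two (hV : finrank K V = 2) {x v : M} (hx : x ∈ V)
    (hv : v ∈ V) (hx0 : x ≠ 0) (hvx : v ∉ K ∙ x) : span K {x, v} = V := by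
  have : FiniteDimensional K V := Module.finite_of_finrank_pos (by omega)
  have hle : span K {x, v} ≤ V := span_le.2 (Set.insert_subset hx (Set.singleton_subset_iff.2 hv))
  have : FiniteDimensional K (span K {x, v}) := Submodule.finiteDimensional_of_le hle
  have hlt : K ∙ x < span K {x, v} :=
    SetLike.lt_iff_le_and_exists.2 ⟨span_mono (by simp), v, subset_span (by simp), hvx⟩
  have h2 := finrank_lt_finrank_of_lt hlt
  rw [finrank_span_singleton hx0] at h2
  exact eq_of_le_of_finrank_le hle (by omega)

theorem mem_span_singleton_or_apply_ne_zero (hV : finrank K V = 2) (f : M →ₗ[K] K) {x : M}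
    (hx : x ∈ V) (hx0 : x ≠ 0) (hfx : f x = 0) (hf : ∃ u ∈ V, f u ≠ 0) {v : M} (hv : v ∈ V) :
    v ∈ K ∙ x ∨ f v ≠ 0 := by
  by_contra! ⟨hvx, hfv⟩
  obtain ⟨u, hu, hfu⟩ := hf
  rw [← span_pair_eq_of_finrank_eq_two hV hx hv hx0 hvx, mem_span_pair] at hu
  obtain ⟨a, b, rfl⟩ := hu
  simp [hfx, hfv] at hfu

end Plane

theorem existsUnique_fin_four_of_dichotomies {p A A' B C : Prop} (hA : A' ↔ ¬A)
    (hB : p → (B ↔ ¬C)) : ∃! j : Fin 4, ![¬p ∧ A, p ∧ B, ¬p ∧ A', p ∧ C] j := by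
  classical
  refine ⟨if p then (if C then 3 else 1) else (if A then 0 else 2), ?_, fun j hj => ?_⟩
  · split_ifs <;> simp_all
  · fin_cases j <;> split_ifs <;> simp_all

theorem flag_exactly_one_property_general {F : Type*} [Field F]
    (v₁ : Fin 3 → F)
    (V₂ : Submodule F (Fin 3 → F)) (hmem : v₁ ∈ V₂)
    (hdim : Module.finrank F V₂ = 2) :
    ∃! j : Fin 4,
      ![ -- Property (O)
         bil v₁ v₁ ≠ 0 ∧ ∀ v ∈ V₂, v ≠ 0 → (bil v₁ v ≠ 0 ∨ bil v v ≠ 0),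
         -- Property (LC1)
         bil v₁ v₁ = 0 ∧ ∀ v ∈ V₂, v ∈ Submodule.span F {v₁} ∨ bil v₁ v ≠ 0,
         -- Property (LC2)
         bil v₁ v₁ ≠ 0 ∧ ∃ v ∈ V₂, v ≠ 0 ∧ bil v₁ v = 0 ∧ bil v v = 0,
         -- Property (C)
         bil v₁ v₁ = 0 ∧ ∀ v ∈ V₂, bil v₁ v = 0 ] j := by
  refine existsUnique_fin_four_of_dichotomies (by push Not; rfl) fun hiso => ⟨?_, ?_⟩
  · intro hLC1 hC
    obtain ⟨v, hv, hvx⟩ := exists_mem_notMem_span_singleton_of_one_lt_finrank hdim.ge v₁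
    exact (hLC1 v hv).elim hvx fun h => h (hC v hv)
  · intro hC v hv
    push Not at hC
    have hv₁ : v₁ ≠ 0 := by
      rintro rfl
      obtain ⟨u, -, hu⟩ := hC
      exact hu (zero_dotProduct u)
    exact mem_span_singleton_or_apply_ne_zero hdim (dotProductBilin F F v₁) hmem hv₁ hiso hC hv

theorem flag_exactly_one_property {F : Type*} [Field F] [IsAlgClosed F]
    (hchar : (2 : F) ≠ 0) (v₁ : Fin 3 → F) (hv₁ : v₁ ≠ 0)
    (V₂ : Submodule F (Fin 3 → F)) (hmem : v₁ ∈ V₂)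
    (hdim : Module.finrank F V₂ = 2) :
    ∃! j : Fin 4,
      ![ -- Property (O)
         bil v₁ v₁ ≠ 0 ∧ ∀ v ∈ V₂, v ≠ 0 → (bil v₁ v ≠ 0 ∨ bil v v ≠ 0),
         -- Property (LC1)
         bil v₁ v₁ = 0 ∧ ∀ v ∈ V₂, v ∈ Submodule.span F {v₁} ∨ bil v₁ v ≠ 0,
         -- Property (LC2)
         bil v₁ v₁ ≠ 0 ∧ ∃ v ∈ V₂, v ≠ 0 ∧ bil v₁ v = 0 ∧ bil v v = 0,
         -- Property (C)
         bil v₁ v₁ = 0 ∧ ∀ v ∈ V₂, bil v₁ v = 0 ] j :=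
  flag_exactly_one_property_general v₁ V₂ hmem hdim
end
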